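/- arXiv:1811.03893 — 3 statements merged into one kernel-verified Lean document; each statement's English description precedes it below -/
import Mathlib

section
/- (Fourier coefficient relations, sine part.) Let u ∈ W^{1,2}(S¹, ℝ^m) and suppose there exists v ∈ L²(S¹, ℝ^m) whose Fourier coefficients satisfy v̂(n) = |n|·û(n) for all n ∈ ℤ (componentwise), and such that u'(θ) · v(θ) = 0 for almost every θ. Then for every integer n ≥ 2: ∑_{k=1}^{n-1} (n-k)·k·(a_k · b_{n-k} + b_k · a_{n-k}) = 0, where a_k = (1/2π)∫₀^{2π} u(θ) cos(kθ) dθ and b_k = (1/2π)∫₀^{2π} u(θ) sin(kθ) dθ are vectors in ℝ^m and · is the Euclidean scalar product. -/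
open Real MeasureTheory intervalIntegral

/-- The `n`-th Fourier coefficient (of the `i`-th component) of a `2π`-periodic map
`w : ℝ → ℝ^m`, namely `(1/2π) ∫₀^{2π} w_i(θ) e^{-inθ} dθ`. -/
noncomputable def circleFourierCoeff {m : ℕ} (w : ℝ → EuclideanSpace ℝ (Fin m))
    (n : ℤ) (i : Fin m) : ℂ :=
  (1 / (2 * π) : ℂ) * ∫ θ in (0:ℝ)..(2 * π),
    ((w θ i : ℝ) : ℂ) * Complex.exp (-(n : ℂ) * (θ : ℂ) * Complex.I)

/-- The `k`-th cosine Fourier coefficient `a_k = (1/2π) ∫₀^{2π} u(θ) cos(kθ) dθ ∈ ℝ^m`. -/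
noncomputable def cosCoeff {m : ℕ} (u : ℝ → EuclideanSpace ℝ (Fin m)) (k : ℕ) :
    EuclideanSpace ℝ (Fin m) :=
  (1 / (2 * π)) • ∫ θ in (0:ℝ)..(2 * π), Real.cos (k * θ) • u θ

/-- The `k`-th sine Fourier coefficient `b_k = (1/2π) ∫₀^{2π} u(θ) sin(kθ) dθ ∈ ℝ^m`. -/
noncomputable def sinCoeff {m : ℕ} (u : ℝ → EuclideanSpace ℝ (Fin m)) (k : ℕ) :
    EuclideanSpace ℝ (Fin m) :=
  (1 / (2 * π)) • ∫ θ in (0:ℝ)..(2 * π), Real.sin (k * θ) • u θ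

open Set AddCircle
open scoped ComplexConjugate

noncomputable section

local instance fact2pi : Fact (0 < 2 * π) := ⟨by positivity⟩

/-- The "unlift" map `AddCircle (2π) → ℝ` landing in `(0, 2π]`. -/
def unlift : AddCircle (2 * π) → ℝ := fun x => ↑((AddCircle.equivIoc (2 * π) 0) x)

lemma measurable_unlift : Measurable unlift :=
  measurable_subtype_coe.comp (AddCircle.measurableEquivIoc (2 * π) 0).measurable

lemma unlift_coe {θ : ℝ} (hθ : θ ∈ Ioc (0:ℝ) (2 * π)) : unlift ((θ : ℝ) : AddCircle (2 * π)) = θ := by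
  have hθ' : θ ∈ Ioc (0:ℝ) (0 + 2 * π) := by simpa using hθ
  have : (equivIoc (2 * π) 0) ((θ : ℝ) : AddCircle (2 * π)) = ⟨θ, hθ'⟩ := by
    rw [Equiv.apply_eq_iff_eq_symm_apply]; rfl
  simp [unlift, this]

lemma measurePreserving_unlift :
    MeasurePreserving unlift (volume : Measure (AddCircle (2 * π)))
      (volume.restrict (Ioc (0:ℝ) (2 * π))) := by
  have hmk := AddCircle.measurePreserving_mk (2 * π) 0
  rw [zero_add] at hmk
  refine ⟨measurable_unlift, ?_⟩
  rw [← hmk.map_eq, Measure.map_map measurable_unlift AddCircle.measurable_mk']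
  have : (unlift ∘ ((↑) : ℝ → AddCircle (2 * π))) =ᵐ[volume.restrict (Ioc (0:ℝ) (2 * π))] id := by
    refine (ae_restrict_iff' measurableSet_Ioc).2 (Filter.Eventually.of_forall fun θ hθ => ?_)
    exact unlift_coe hθ
  rw [Measure.map_congr this, Measure.map_id]


lemma haar_le_volume : (haarAddCircle : Measure (AddCircle (2 * π))) ≤ volume := by
  rw [Measure.le_iff']
  intro s
  rw [volume_eq_smul_haarAddCircle, Measure.smul_apply, smul_eq_mul]
  exact le_mul_of_one_le_left (by positivity)
    ((ENNReal.one_le_ofReal).2 (by linarith [pi_gt_three]))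

lemma memLp_comp_unlift {f : ℝ → ℂ} (hf : MemLp f 2 (volume.restrict (Ioc (0:ℝ) (2 * π)))) :
    MemLp (f ∘ unlift) 2 (haarAddCircle : Measure (AddCircle (2 * π))) :=
  (hf.comp_measurePreserving measurePreserving_unlift).mono_measure haar_le_volume

lemma fourier_apply_real (n : ℤ) (θ : ℝ) :
    fourier n ((θ:ℝ) : AddCircle (2 * π)) = Complex.exp (n * θ * Complex.I) := by
  rw [fourier_coe_apply]
  congr 1
  have hπ : (π:ℂ) ≠ 0 := Complex.ofReal_ne_zero.2 pi_ne_zero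
  field_simp
  push_cast
  ring

lemma fourierCoeff_comp_unlift (f : ℝ → ℂ) (n : ℤ) :
    fourierCoeff (f ∘ unlift) n =
      (1 / (2 * π) : ℂ) * ∫ θ in (0:ℝ)..(2 * π), f θ * Complex.exp (-(n:ℂ) * θ * Complex.I) := by
  rw [fourierCoeff_eq_intervalIntegral (f ∘ unlift) n 0, zero_add]
  have : ∫ θ in (0:ℝ)..(2 * π), fourier (-n) ((θ:ℝ) : AddCircle (2 * π)) • (f ∘ unlift) ((θ:ℝ) : AddCircle (2 * π))
      = ∫ θ in (0:ℝ)..(2 * π), f θ * Complex.exp (-(n:ℂ) * θ * Complex.I) := by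
    rw [intervalIntegral.integral_of_le (by positivity), intervalIntegral.integral_of_le (by positivity)]
    refine setIntegral_congr_fun measurableSet_Ioc fun θ hθ => ?_
    rw [Function.comp_apply, unlift_coe hθ, fourier_apply_real, smul_eq_mul, mul_comm]
    push_cast
    ring_nf
  rw [this]
  simp [smul_eq_mul]

lemma hasSum_conj_mul (f h : ℝ → ℂ)
    (hf : MemLp f 2 (volume.restrict (Ioc (0:ℝ) (2 * π))))
    (hh : MemLp h 2 (volume.restrict (Ioc (0:ℝ) (2 * π)))) :
    HasSum (fun k : ℤ => conj (fourierCoeff (f ∘ unlift) k) * fourierCoeff (h ∘ unlift) k)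
      ((1 / (2 * π) : ℂ) * ∫ θ in Ioc (0:ℝ) (2 * π), conj (f θ) * h θ) := by
  set F := (memLp_comp_unlift hf).toLp (f ∘ unlift) with hF
  set H := (memLp_comp_unlift hh).toLp (h ∘ unlift) with hH
  have key := fourierBasis.hasSum_inner_mul_inner F H
  have e1 : ∀ k : ℤ, (inner ℂ (fourierBasis k) F : ℂ) = fourierCoeff (f ∘ unlift) k := by
    intro k
    rw [← fourierBasis.repr_apply_apply, fourierBasis_repr]
    simp only [fourierCoeff]
    refine integral_congr_ae ?_
    filter_upwards [(memLp_comp_unlift hf).coeFn_toLp] with x hx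
    rw [show ((F : Lp ℂ 2 (haarAddCircle : Measure (AddCircle (2 * π)))) : AddCircle (2 * π) → ℂ) x = (f ∘ unlift) x from hx]
  have e2 : ∀ k : ℤ, (inner ℂ (fourierBasis k) H : ℂ) = fourierCoeff (h ∘ unlift) k := by
    intro k
    rw [← fourierBasis.repr_apply_apply, fourierBasis_repr]
    simp only [fourierCoeff]
    refine integral_congr_ae ?_
    filter_upwards [(memLp_comp_unlift hh).coeFn_toLp] with x hx
    rw [show ((H : Lp ℂ 2 (haarAddCircle : Measure (AddCircle (2 * π)))) : AddCircle (2 * π) → ℂ) x = (h ∘ unlift) x from hx]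
  have e3 : (inner ℂ F H : ℂ) = (1 / (2 * π) : ℂ) * ∫ θ in Ioc (0:ℝ) (2 * π), conj (f θ) * h θ := by
    rw [MeasureTheory.L2.inner_def]
    have : ∫ x, (inner ℂ (F x) (H x) : ℂ) ∂(haarAddCircle : Measure (AddCircle (2 * π)))
        = ∫ x, conj ((f ∘ unlift) x) * ((h ∘ unlift) x) ∂(haarAddCircle : Measure (AddCircle (2 * π))) := by
      refine integral_congr_ae ?_
      filter_upwards [(memLp_comp_unlift hf).coeFn_toLp, (memLp_comp_unlift hh).coeFn_toLp] with x hx hx'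
      rw [RCLike.inner_apply', hF, hH, hx, hx']
    rw [this]
    have hvol : ∫ x, conj ((f ∘ unlift) x) * ((h ∘ unlift) x) ∂(volume : Measure (AddCircle (2 * π)))
        = (2 * π) • ∫ x, conj ((f ∘ unlift) x) * ((h ∘ unlift) x) ∂(haarAddCircle : Measure (AddCircle (2 * π))) := by
      rw [volume_eq_smul_haarAddCircle, MeasureTheory.integral_smul_measure, ENNReal.toReal_ofReal (by positivity)]
    have hioc : ∫ x, conj ((f ∘ unlift) x) * ((h ∘ unlift) x) ∂(volume : Measure (AddCircle (2 * π)))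
        = ∫ θ in Ioc (0:ℝ) (2 * π), conj (f θ) * h θ := by
      rw [show Ioc (0:ℝ) (2 * π) = Ioc (0:ℝ) (0 + 2 * π) by rw [zero_add]]
      rw [← AddCircle.integral_preimage (2 * π) 0 (fun x => conj ((f ∘ unlift) x) * ((h ∘ unlift) x))]
      refine setIntegral_congr_fun measurableSet_Ioc fun θ hθ => ?_
      rw [zero_add] at hθ
      simp [unlift_coe hθ]
    have h2π : (2 * (π:ℂ)) ≠ 0 := by
      have := Complex.ofReal_ne_zero.2 pi_ne_zero
      simpa using this
    rw [← hioc, hvol]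
    push_cast
    rw [Complex.real_smul]
    push_cast
    field_simp
  rw [← e3]
  have hfun : (fun k : ℤ => conj (fourierCoeff (f ∘ unlift) k) * fourierCoeff (h ∘ unlift) k)
      = fun i => inner ℂ F (fourierBasis i) * inner ℂ (fourierBasis i) H := by
    funext k
    rw [← e1 k, ← e2 k, inner_conj_symm]
  rw [hfun]
  exact key

variable {m : ℕ}

/-- component as a complex-valued function -/
def cComp (w : ℝ → EuclideanSpace ℝ (Fin m)) (i : Fin m) : ℝ → ℂ := fun θ => ((w θ i : ℝ) : ℂ)

lemma memLp_cComp {w : ℝ → EuclideanSpace ℝ (Fin m)} {i : Fin m}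
    (hw : MemLp w 2 (volume.restrict (Ioc (0:ℝ) (2 * π)))) :
    MemLp (cComp w i) 2 (volume.restrict (Ioc (0:ℝ) (2 * π))) :=
  (Complex.ofRealCLM.comp (EuclideanSpace.proj i)).comp_memLp' hw

lemma integrable_of_memLp2 {w : ℝ → EuclideanSpace ℝ (Fin m)}
    (hw : MemLp w 2 (volume.restrict (Ioc (0:ℝ) (2 * π)))) :
    IntegrableOn w (Ioc (0:ℝ) (2 * π)) volume :=
  hw.integrable (by norm_num)

lemma intervalIntegrable_of_memLp2 {w : ℝ → EuclideanSpace ℝ (Fin m)}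
    (hw : MemLp w 2 (volume.restrict (Ioc (0:ℝ) (2 * π)))) :
    IntervalIntegrable w volume 0 (2 * π) := by
  rw [intervalIntegrable_iff, uIoc_of_le (by positivity)]
  exact integrable_of_memLp2 hw

lemma intervalIntegrable_smul_of_memLp2 {w : ℝ → EuclideanSpace ℝ (Fin m)}
    (hw : MemLp w 2 (volume.restrict (Ioc (0:ℝ) (2 * π)))) {c : ℝ → ℝ}
    (hc : Continuous c) (hbd : ∀ x, |c x| ≤ 1) :
    IntervalIntegrable (fun θ => c θ • w θ) volume 0 (2 * π) := by
  rw [intervalIntegrable_iff, uIoc_of_le (by positivity)]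
  exact (integrable_of_memLp2 hw).smul_of_top_right
    (memLp_top_of_bound hc.aestronglyMeasurable.restrict 1
      (Filter.Eventually.of_forall fun x => by simpa using hbd x))

lemma hasDerivAt_cos_mul (k : ℕ) (θ : ℝ) :
    HasDerivAt (fun θ : ℝ => Real.cos ((k:ℝ) * θ)) (-((k:ℝ) * Real.sin ((k:ℝ) * θ))) θ := by
  have h1 : HasDerivAt (fun θ : ℝ => (k:ℝ) * θ) (k:ℝ) θ := by
    simpa using (hasDerivAt_id θ).const_mul (k:ℝ)
  have h2 := (Real.hasDerivAt_cos ((k:ℝ) * θ)).comp θ h1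
  have h3 : -Real.sin ((k:ℝ) * θ) * (k:ℝ) = -((k:ℝ) * Real.sin ((k:ℝ) * θ)) := by ring
  exact h3 ▸ h2

lemma hasDerivAt_sin_mul (k : ℕ) (θ : ℝ) :
    HasDerivAt (fun θ : ℝ => Real.sin ((k:ℝ) * θ)) ((k:ℝ) * Real.cos ((k:ℝ) * θ)) θ := by
  have h1 : HasDerivAt (fun θ : ℝ => (k:ℝ) * θ) (k:ℝ) θ := by
    simpa using (hasDerivAt_id θ).const_mul (k:ℝ)
  have h2 := (Real.hasDerivAt_sin ((k:ℝ) * θ)).comp θ h1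
  have h3 : Real.cos ((k:ℝ) * θ) * (k:ℝ) = (k:ℝ) * Real.cos ((k:ℝ) * θ) := by ring
  exact h3 ▸ h2

lemma periodic_cos_mul (k : ℕ) : Function.Periodic (fun θ : ℝ => Real.cos ((k:ℝ) * θ)) (2 * π) := by
  intro θ
  simp only [mul_add]
  exact_mod_cast Real.cos_add_int_mul_two_pi ((k:ℝ) * θ) k

lemma periodic_sin_mul (k : ℕ) : Function.Periodic (fun θ : ℝ => Real.sin ((k:ℝ) * θ)) (2 * π) := by
  intro θ
  simp only [mul_add]
  exact_mod_cast Real.sin_add_int_mul_two_pi ((k:ℝ) * θ) k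

section weak

variable {u u' : ℝ → EuclideanSpace ℝ (Fin m)}
  (hweak : ∀ φ : ℝ → ℝ, ContDiff ℝ (⊤ : ℕ∞) φ → Function.Periodic φ (2 * π) →
      (∫ θ in (0:ℝ)..(2 * π), φ θ • u' θ) = -∫ θ in (0:ℝ)..(2 * π), deriv φ θ • u θ)

include hweak

lemma cosCoeff_deriv (k : ℕ) : cosCoeff u' k = (k:ℝ) • sinCoeff u k := by
  have hcd : ContDiff ℝ (⊤ : ℕ∞) (fun θ : ℝ => Real.cos ((k:ℝ) * θ)) :=
    Real.contDiff_cos.comp (contDiff_const.mul contDiff_id)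
  have h := hweak _ hcd (periodic_cos_mul k)
  have hd : (deriv fun θ : ℝ => Real.cos ((k:ℝ) * θ)) =
      fun θ => -((k:ℝ) * Real.sin ((k:ℝ) * θ)) := funext fun θ => (hasDerivAt_cos_mul k θ).deriv
  rw [hd] at h
  have h2 : (∫ θ in (0:ℝ)..(2 * π), (-((k:ℝ) * Real.sin ((k:ℝ) * θ))) • u θ)
      = -((k:ℝ) • ∫ θ in (0:ℝ)..(2 * π), Real.sin ((k:ℝ) * θ) • u θ) := by
    rw [← intervalIntegral.integral_smul, ← intervalIntegral.integral_neg]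
    congr 1
    funext θ
    rw [smul_smul]
    simp [neg_smul]
  rw [h2, neg_neg] at h
  rw [cosCoeff, sinCoeff, h, smul_comm]

lemma sinCoeff_deriv (k : ℕ) : sinCoeff u' k = -((k:ℝ) • cosCoeff u k) := by
  have hcd : ContDiff ℝ (⊤ : ℕ∞) (fun θ : ℝ => Real.sin ((k:ℝ) * θ)) :=
    Real.contDiff_sin.comp (contDiff_const.mul contDiff_id)
  have h := hweak _ hcd (periodic_sin_mul k)
  have hd : (deriv fun θ : ℝ => Real.sin ((k:ℝ) * θ)) =
      fun θ => (k:ℝ) * Real.cos ((k:ℝ) * θ) := funext fun θ => (hasDerivAt_sin_mul k θ).deriv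
  rw [hd] at h
  have h2 : (∫ θ in (0:ℝ)..(2 * π), ((k:ℝ) * Real.cos ((k:ℝ) * θ)) • u θ)
      = (k:ℝ) • ∫ θ in (0:ℝ)..(2 * π), Real.cos ((k:ℝ) * θ) • u θ := by
    rw [← intervalIntegral.integral_smul]
    congr 1
    funext θ
    rw [smul_smul]
  rw [h2] at h
  rw [sinCoeff, cosCoeff, h, smul_neg, smul_comm]

end weak

lemma intervalIntegrable_comp_mul {w : ℝ → EuclideanSpace ℝ (Fin m)}
    (hw : MemLp w 2 (volume.restrict (Ioc (0:ℝ) (2 * π)))) (i : Fin m) {c : ℝ → ℝ}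
    (hc : Continuous c) (hbd : ∀ x, |c x| ≤ 1) :
    IntervalIntegrable (fun θ => c θ * w θ i) volume 0 (2 * π) := by
  rw [intervalIntegrable_iff, uIoc_of_le (by positivity)]
  have h1 : Integrable (fun θ => w θ i) (volume.restrict (Ioc (0:ℝ) (2 * π))) := by
    have := ((EuclideanSpace.proj (𝕜 := ℝ) i).comp_memLp' hw).integrable (by norm_num : (1:ENNReal) ≤ 2)
    simpa [Function.comp_def, PiLp.proj_apply] using this
  have h2 := h1.smul_of_top_right
    (memLp_top_of_bound hc.aestronglyMeasurable.restrict 1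
      (Filter.Eventually.of_forall fun x => by simpa using hbd x))
  have h3 : (c • fun θ => w θ i) = fun θ => c θ * w θ i := by
    funext θ; simp [Pi.smul_apply', smul_eq_mul]
  rw [h3] at h2
  exact h2

lemma cosCoeff_apply {w : ℝ → EuclideanSpace ℝ (Fin m)}
    (hw : MemLp w 2 (volume.restrict (Ioc (0:ℝ) (2 * π)))) (k : ℕ) (i : Fin m) :
    cosCoeff w k i = (1/(2*π)) * ∫ θ in (0:ℝ)..(2 * π), Real.cos ((k:ℝ)*θ) * w θ i := by
  have hI : IntervalIntegrable (fun θ => Real.cos ((k:ℝ)*θ) • w θ) volume 0 (2 * π) :=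
    intervalIntegrable_smul_of_memLp2 hw (Real.continuous_cos.comp (continuous_const.mul continuous_id))
      (fun x => Real.abs_cos_le_one _)
  have h2 := (EuclideanSpace.proj (𝕜 := ℝ) i).intervalIntegral_comp_comm hI
  simp only [PiLp.proj_apply, PiLp.smul_apply, smul_eq_mul] at h2
  have h3 : (∫ θ in (0:ℝ)..(2 * π), Real.cos ((k:ℝ)*θ) • w θ) i
      = ∫ θ in (0:ℝ)..(2 * π), Real.cos ((k:ℝ)*θ) * w θ i := h2.symm
  rw [cosCoeff]
  show (1/(2*π)) * ((∫ θ in (0:ℝ)..(2 * π), Real.cos ((k:ℝ)*θ) • w θ) i) = _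
  rw [h3]

lemma sinCoeff_apply {w : ℝ → EuclideanSpace ℝ (Fin m)}
    (hw : MemLp w 2 (volume.restrict (Ioc (0:ℝ) (2 * π)))) (k : ℕ) (i : Fin m) :
    sinCoeff w k i = (1/(2*π)) * ∫ θ in (0:ℝ)..(2 * π), Real.sin ((k:ℝ)*θ) * w θ i := by
  have hI : IntervalIntegrable (fun θ => Real.sin ((k:ℝ)*θ) • w θ) volume 0 (2 * π) :=
    intervalIntegrable_smul_of_memLp2 hw (Real.continuous_sin.comp (continuous_const.mul continuous_id))
      (fun x => Real.abs_sin_le_one _)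
  have h2 := (EuclideanSpace.proj (𝕜 := ℝ) i).intervalIntegral_comp_comm hI
  simp only [PiLp.proj_apply, PiLp.smul_apply, smul_eq_mul] at h2
  have h3 : (∫ θ in (0:ℝ)..(2 * π), Real.sin ((k:ℝ)*θ) • w θ) i
      = ∫ θ in (0:ℝ)..(2 * π), Real.sin ((k:ℝ)*θ) * w θ i := h2.symm
  rw [sinCoeff]
  show (1/(2*π)) * ((∫ θ in (0:ℝ)..(2 * π), Real.sin ((k:ℝ)*θ) • w θ) i) = _
  rw [h3]

lemma circleFourierCoeff_natCast {w : ℝ → EuclideanSpace ℝ (Fin m)}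
    (hw : MemLp w 2 (volume.restrict (Ioc (0:ℝ) (2 * π)))) (k : ℕ) (i : Fin m) :
    circleFourierCoeff w (k : ℤ) i
      = ((cosCoeff w k i : ℝ) : ℂ) - Complex.I * ((sinCoeff w k i : ℝ) : ℂ) := by
  have hexp : ∀ θ : ℝ, ((w θ i : ℝ) : ℂ) * Complex.exp (-((k:ℤ) : ℂ) * (θ:ℂ) * Complex.I)
      = ((Real.cos ((k:ℝ)*θ) * w θ i : ℝ) : ℂ)
        - ((Real.sin ((k:ℝ)*θ) * w θ i : ℝ) : ℂ) * Complex.I := by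
    intro θ
    have : (-((k:ℤ) : ℂ) * (θ:ℂ) * Complex.I) = ((-((k:ℝ)*θ) : ℝ) : ℂ) * Complex.I := by
      push_cast; ring
    rw [this, Complex.exp_mul_I, ← Complex.ofReal_cos, ← Complex.ofReal_sin,
      Real.cos_neg, Real.sin_neg]
    push_cast
    ring
  have hIc : IntervalIntegrable (fun θ => ((Real.cos ((k:ℝ)*θ) * w θ i : ℝ) : ℂ)) volume 0 (2 * π) := by
    rw [intervalIntegrable_iff, uIoc_of_le (by positivity)]
    have := intervalIntegrable_comp_mul hw i (c := fun θ => Real.cos ((k:ℝ)*θ))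
      (Real.continuous_cos.comp (continuous_const.mul continuous_id)) (fun x => Real.abs_cos_le_one _)
    rw [intervalIntegrable_iff, uIoc_of_le (by positivity)] at this
    exact this.ofReal
  have hIs : IntervalIntegrable (fun θ => ((Real.sin ((k:ℝ)*θ) * w θ i : ℝ) : ℂ) * Complex.I) volume 0 (2 * π) := by
    rw [intervalIntegrable_iff, uIoc_of_le (by positivity)]
    have := intervalIntegrable_comp_mul hw i (c := fun θ => Real.sin ((k:ℝ)*θ))
      (Real.continuous_sin.comp (continuous_const.mul continuous_id)) (fun x => Real.abs_sin_le_one _)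
    rw [intervalIntegrable_iff, uIoc_of_le (by positivity)] at this
    exact this.ofReal.mul_const _
  rw [circleFourierCoeff]
  rw [intervalIntegral.integral_congr (g := fun θ => ((Real.cos ((k:ℝ)*θ) * w θ i : ℝ) : ℂ)
    - ((Real.sin ((k:ℝ)*θ) * w θ i : ℝ) : ℂ) * Complex.I) (fun θ _ => hexp θ)]
  rw [intervalIntegral.integral_sub hIc hIs, intervalIntegral.integral_mul_const,
    intervalIntegral.integral_ofReal, intervalIntegral.integral_ofReal]
  rw [cosCoeff_apply hw k i, sinCoeff_apply hw k i]
  have hπ : ((2 * π : ℝ) : ℂ) ≠ 0 := by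
    simpa using Complex.ofReal_ne_zero.2 (by positivity : (2*π:ℝ) ≠ 0)
  push_cast
  ring

lemma circleFourierCoeff_neg (w : ℝ → EuclideanSpace ℝ (Fin m)) (k : ℤ) (i : Fin m) :
    circleFourierCoeff w (-k) i = conj (circleFourierCoeff w k i) := by
  rw [circleFourierCoeff, circleFourierCoeff, map_mul]
  have h1 : conj ((1 / (2 * π) : ℂ)) = (1 / (2 * π) : ℂ) := by
    rw [show ((1:ℂ) / (2 * (π:ℂ))) = (((1/(2*π):ℝ)):ℂ) by push_cast; ring, Complex.conj_ofReal]
  rw [h1]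
  congr 1
  rw [intervalIntegral.integral_of_le (by positivity), intervalIntegral.integral_of_le (by positivity),
    ← integral_conj]
  refine setIntegral_congr_fun measurableSet_Ioc fun θ _ => ?_
  rw [map_mul, Complex.conj_ofReal, ← Complex.exp_conj]
  congr 1
  simp only [map_mul, map_neg, Complex.conj_ofReal, Complex.conj_I, map_intCast]
  push_cast
  ring

section weak2

variable {u u' : ℝ → EuclideanSpace ℝ (Fin m)}
  (hu2 : MemLp u 2 (volume.restrict (Ioc (0:ℝ) (2 * π))))
  (hu'2 : MemLp u' 2 (volume.restrict (Ioc (0:ℝ) (2 * π))))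
  (hweak : ∀ φ : ℝ → ℝ, ContDiff ℝ (⊤ : ℕ∞) φ → Function.Periodic φ (2 * π) →
      (∫ θ in (0:ℝ)..(2 * π), φ θ • u' θ) = -∫ θ in (0:ℝ)..(2 * π), deriv φ θ • u θ)

include hu2 hu'2 hweak

lemma circleFourierCoeff_deriv_nat (j : ℕ) (i : Fin m) :
    circleFourierCoeff u' (j : ℤ) i = Complex.I * (j : ℤ) * circleFourierCoeff u (j : ℤ) i := by
  rw [circleFourierCoeff_natCast hu'2 j i, circleFourierCoeff_natCast hu2 j i,
    cosCoeff_deriv hweak j, sinCoeff_deriv hweak j]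
  have e1 : ((j:ℝ) • sinCoeff u j) i = (j:ℝ) * sinCoeff u j i := rfl
  have e2 : (-((j:ℝ) • cosCoeff u j)) i = -((j:ℝ) * cosCoeff u j i) := rfl
  rw [e1, e2]
  push_cast
  ring_nf
  rw [Complex.I_sq]
  ring

lemma circleFourierCoeff_deriv (k : ℤ) (i : Fin m) :
    circleFourierCoeff u' k i = Complex.I * k * circleFourierCoeff u k i := by
  obtain ⟨j, rfl | rfl⟩ := k.eq_nat_or_neg
  · exact circleFourierCoeff_deriv_nat hu2 hu'2 hweak j i
  · rw [circleFourierCoeff_neg, circleFourierCoeff_neg,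
      circleFourierCoeff_deriv_nat hu2 hu'2 hweak j i]
    simp only [map_mul, Complex.conj_I, map_natCast, map_intCast, Complex.conj_ofReal]
    push_cast
    ring

end weak2


/-- complex exponential weight -/
def eN (n : ℤ) : ℝ → ℂ := fun θ => Complex.exp (-(n:ℂ) * θ * Complex.I)

lemma continuous_eN (n : ℤ) : Continuous (eN n) := by
  unfold eN
  fun_prop

lemma norm_eN (n : ℤ) (θ : ℝ) : ‖eN n θ‖ = 1 := by
  unfold eN
  rw [Complex.norm_exp]
  have : (-(n:ℂ) * θ * Complex.I).re = 0 := by simp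
  rw [this, Real.exp_zero]

lemma fourierCoeff_cComp {w : ℝ → EuclideanSpace ℝ (Fin m)} (k : ℤ) (i : Fin m) :
    fourierCoeff (cComp w i ∘ unlift) k = circleFourierCoeff w k i := by
  rw [fourierCoeff_comp_unlift]
  rfl

lemma memLp_cComp_mul_eN {w : ℝ → EuclideanSpace ℝ (Fin m)} {i : Fin m}
    (hw : MemLp w 2 (volume.restrict (Ioc (0:ℝ) (2 * π)))) (n : ℤ) :
    MemLp (fun θ => cComp w i θ * eN n θ) 2 (volume.restrict (Ioc (0:ℝ) (2 * π))) := by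
  have h1 : MemLp (eN n) ⊤ (volume.restrict (Ioc (0:ℝ) (2 * π))) :=
    memLp_top_of_bound (continuous_eN n).aestronglyMeasurable.restrict 1
      (Filter.Eventually.of_forall fun x => by rw [norm_eN])
  have h2 := (memLp_cComp (i := i) hw).smul (r := 2) h1
  have h3 : (eN n • cComp w i) = fun θ => cComp w i θ * eN n θ := by
    funext θ; simp [Pi.smul_apply', smul_eq_mul, mul_comm]
  rwa [h3] at h2

lemma fourierCoeff_cComp_mul_eN {w : ℝ → EuclideanSpace ℝ (Fin m)} (k n : ℤ) (i : Fin m) :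
    fourierCoeff ((fun θ => cComp w i θ * eN n θ) ∘ unlift) k = circleFourierCoeff w (k + n) i := by
  rw [fourierCoeff_comp_unlift, circleFourierCoeff]
  congr 1
  refine intervalIntegral.integral_congr fun θ _ => ?_
  show cComp w i θ * eN n θ * Complex.exp (-(k : ℂ) * θ * Complex.I)
      = ((w θ i : ℝ) : ℂ) * Complex.exp (-(((k+n) : ℤ) : ℂ) * θ * Complex.I)
  unfold eN cComp
  rw [mul_assoc, ← Complex.exp_add]
  congr 2
  push_cast
  ring


lemma integrable_prod_term {u' v : ℝ → EuclideanSpace ℝ (Fin m)}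
    (hu'2 : MemLp u' 2 (volume.restrict (Ioc (0:ℝ) (2 * π))))
    (hv2 : MemLp v 2 (volume.restrict (Ioc (0:ℝ) (2 * π)))) (n : ℤ) (i : Fin m) :
    Integrable (fun θ => cComp u' i θ * (cComp v i θ * eN n θ))
      (volume.restrict (Ioc (0:ℝ) (2 * π))) := by
  have h := (memLp_cComp_mul_eN (i := i) hv2 n).smul (memLp_cComp (i := i) hu'2)
    (p := 2) (q := 2) (r := 1)
  have h2 : (cComp u' i • fun θ => cComp v i θ * eN n θ)
      = fun θ => cComp u' i θ * (cComp v i θ * eN n θ) := by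
    funext θ; simp [Pi.smul_apply', smul_eq_mul]
  rw [h2] at h
  exact memLp_one_iff_integrable.mp h

lemma hasSum_ortho {u' v : ℝ → EuclideanSpace ℝ (Fin m)}
    (hu'2 : MemLp u' 2 (volume.restrict (Ioc (0:ℝ) (2 * π))))
    (hv2 : MemLp v 2 (volume.restrict (Ioc (0:ℝ) (2 * π))))
    (horth : ∀ᵐ θ : ℝ, inner ℝ (u' θ) (v θ) = (0 : ℝ)) (n : ℤ) :
    HasSum (fun k : ℤ => ∑ i : Fin m,
      conj (circleFourierCoeff u' k i) * circleFourierCoeff v (k + n) i) 0 := by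
  have hterm : ∀ i : Fin m,
      HasSum (fun k : ℤ => conj (circleFourierCoeff u' k i) * circleFourierCoeff v (k + n) i)
        ((1 / (2 * π) : ℂ) * ∫ θ in Ioc (0:ℝ) (2 * π), cComp u' i θ * (cComp v i θ * eN n θ)) := by
    intro i
    have h := hasSum_conj_mul (cComp u' i) (fun θ => cComp v i θ * eN n θ)
      (memLp_cComp hu'2) (memLp_cComp_mul_eN hv2 n)
    have e0 : (∫ θ in Ioc (0:ℝ) (2 * π), conj (cComp u' i θ) * (cComp v i θ * eN n θ))
        = ∫ θ in Ioc (0:ℝ) (2 * π), cComp u' i θ * (cComp v i θ * eN n θ) := by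
      refine setIntegral_congr_fun measurableSet_Ioc fun θ _ => ?_
      rw [show conj (cComp u' i θ) = cComp u' i θ from Complex.conj_ofReal _]
    rw [e0] at h
    simpa only [fourierCoeff_cComp, fourierCoeff_cComp_mul_eN] using h
  have hsum := hasSum_sum (f := fun i k => conj (circleFourierCoeff u' k i) * circleFourierCoeff v (k + n) i)
    (s := Finset.univ) (fun i _ => hterm i)
  have hzero : ∑ i : Fin m, ((1 / (2 * π) : ℂ) *
      ∫ θ in Ioc (0:ℝ) (2 * π), cComp u' i θ * (cComp v i θ * eN n θ)) = 0 := by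
    rw [← Finset.mul_sum, ← integral_finset_sum _ (fun i _ => integrable_prod_term hu'2 hv2 n i)]
    have : (∫ θ in Ioc (0:ℝ) (2 * π), ∑ i : Fin m, cComp u' i θ * (cComp v i θ * eN n θ)) = 0 := by
      refine integral_eq_zero_of_ae ?_
      filter_upwards [ae_restrict_of_ae horth] with θ hθ
      have hs : ∑ i : Fin m, u' θ i * v θ i = 0 := by
        simpa [PiLp.inner_apply, RCLike.inner_apply, mul_comm] using hθ
      have hc : ∑ i : Fin m, cComp u' i θ * (cComp v i θ * eN n θ)
          = ((∑ i : Fin m, u' θ i * v θ i : ℝ) : ℂ) * eN n θ := by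
        rw [Complex.ofReal_sum, Finset.sum_mul]
        refine Finset.sum_congr rfl fun i _ => ?_
        unfold cComp
        push_cast
        ring
      rw [hc, hs]
      simp
    rw [this, mul_zero]
  rw [← hzero]
  exact hsum

lemma tail_cancel (N : ℤ) (hN : 2 ≤ N) (S : ℤ → ℂ) (hS : ∀ k, S (-N - k) = S k)
    (ht : HasSum (fun k : ℤ => (-Complex.I) * k * ((|k + N| : ℤ) : ℂ) * S k) 0) :
    (∑ j ∈ Finset.Ico (1:ℤ) N, Complex.I * j * (N - j) * S (-j)) = 0 := by
  set t' : ℤ → ℂ := fun k => (-Complex.I) * k * ((|k + N| : ℤ) : ℂ) * S k with ht'def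
  have ht2 : HasSum (fun k : ℤ => t' (-N - k)) 0 := by
    have := (Equiv.subLeft (-N)).hasSum_iff.mpr ht
    convert this using 1
    rfl
  have hh : HasSum (fun k => t' k + t' (-N - k)) 0 := by simpa using ht.add ht2
  set Sfin := (Finset.Ico (1:ℤ) N).image (fun j => -j) with hSfin
  have hvan : ∀ k ∉ Sfin, t' k + t' (-N - k) = 0 := by
    intro k hk
    have hcase : 0 ≤ k ∨ k ≤ -N := by
      by_contra hc
      push_neg at hc
      apply hk
      rw [hSfin, Finset.mem_image]
      exact ⟨-k, by rw [Finset.mem_Ico]; omega, by omega⟩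
    have hSk : S (-N - k) = S k := hS k
    rw [ht'def]
    simp only []
    rw [hSk]
    have habs : ((-N - k) + N) = -k := by ring
    rw [habs]
    rcases hcase with h | h
    · rw [abs_of_nonneg (by omega : (0:ℤ) ≤ k + N), abs_of_nonpos (by omega : (-k:ℤ) ≤ 0)]
      push_cast
      ring
    · rw [abs_of_nonpos (by omega : (k + N:ℤ) ≤ 0), abs_of_nonneg (by omega : (0:ℤ) ≤ -k)]
      push_cast
      ring
  have hfin : HasSum (fun k => t' k + t' (-N - k)) (∑ k ∈ Sfin, (t' k + t' (-N - k))) :=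
    hasSum_sum_of_ne_finset_zero hvan
  have hzero : (∑ k ∈ Sfin, (t' k + t' (-N - k))) = 0 := hfin.unique hh
  rw [hSfin, Finset.sum_image (fun a _ b _ h => neg_injective h)] at hzero
  have hre : ∀ j ∈ Finset.Ico (1:ℤ) N, t' (-N - -j) = t' (-(N - j)) := by
    intro j _
    congr 1
    ring
  rw [Finset.sum_congr rfl (fun j hj => by rw [hre j hj])] at hzero
  rw [Finset.sum_add_distrib] at hzero
  have hrefl : (∑ j ∈ Finset.Ico (1:ℤ) N, t' (-(N - j))) = ∑ j ∈ Finset.Ico (1:ℤ) N, t' (-j) := by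
    have himg : (Finset.Ico (1:ℤ) N).image (fun j => N - j) = Finset.Ico (1:ℤ) N := by
      ext k
      simp only [Finset.mem_image, Finset.mem_Ico]
      constructor
      · rintro ⟨j, ⟨h1, h2⟩, rfl⟩; omega
      · intro hk; exact ⟨N - k, by omega, by omega⟩
    calc (∑ j ∈ Finset.Ico (1:ℤ) N, t' (-(N - j)))
        = ∑ j ∈ (Finset.Ico (1:ℤ) N).image (fun j => N - j), t' (-j) := by
          rw [Finset.sum_image (fun a _ b _ h => by omega)]
      _ = ∑ j ∈ Finset.Ico (1:ℤ) N, t' (-j) := by rw [himg]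
  rw [hrefl] at hzero
  have h2 : (2:ℂ) • (∑ j ∈ Finset.Ico (1:ℤ) N, t' (-j)) = 0 := by
    rw [two_smul]
    exact hzero
  have hsum0 : (∑ j ∈ Finset.Ico (1:ℤ) N, t' (-j)) = 0 := by
    have := smul_eq_zero.mp h2
    rcases this with h | h
    · norm_num at h
    · exact h
  rw [← hsum0]
  refine Finset.sum_congr rfl fun j hj => ?_
  rw [Finset.mem_Ico] at hj
  rw [ht'def]
  simp only []
  rw [show (-j + N : ℤ) = N - j by ring, abs_of_nonneg (by omega : (0:ℤ) ≤ N - j)]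
  push_cast
  ring

/-- **Fourier coefficient relations, sine part.** Under the half-harmonicity conditions,
for every `n ≥ 2` one has `∑_{k=1}^{n-1} (n-k)k (a_k · b_{n-k} + b_k · a_{n-k}) = 0`. -/
theorem fourier_coefficient_relations_sin {m : ℕ}
    (u u' v : ℝ → EuclideanSpace ℝ (Fin m))
    (hu_per : Function.Periodic u (2 * π))
    (hu'_per : Function.Periodic u' (2 * π))
    (hv_per : Function.Periodic v (2 * π))
    (hu2 : MemLp u 2 (volume.restrict (Set.Ioc (0:ℝ) (2 * π))))
    (hu'2 : MemLp u' 2 (volume.restrict (Set.Ioc (0:ℝ) (2 * π))))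
    (hv2 : MemLp v 2 (volume.restrict (Set.Ioc (0:ℝ) (2 * π))))
    (hweak : ∀ φ : ℝ → ℝ, ContDiff ℝ (⊤ : ℕ∞) φ → Function.Periodic φ (2 * π) →
      (∫ θ in (0:ℝ)..(2 * π), φ θ • u' θ) = -∫ θ in (0:ℝ)..(2 * π), deriv φ θ • u θ)
    (hhalf : ∀ (n : ℤ) (i : Fin m),
      circleFourierCoeff v n i = ((|n| : ℤ) : ℂ) * circleFourierCoeff u n i)
    (horth : ∀ᵐ θ : ℝ, inner ℝ (u' θ) (v θ) = (0 : ℝ)) :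
    ∀ n : ℕ, 2 ≤ n →
      ∑ k ∈ Finset.Ico 1 n, (((n - k) * k : ℕ) : ℝ) *
        ((inner ℝ (cosCoeff u k) (sinCoeff u (n - k)) : ℝ)
          + (inner ℝ (sinCoeff u k) (cosCoeff u (n - k)) : ℝ)) = 0 := by
  intro n hn
  set S : ℤ → ℂ := fun k => ∑ i : Fin m,
    circleFourierCoeff u (-k) i * circleFourierCoeff u (k + (n:ℤ)) i with hSdef
  have ht : HasSum (fun k : ℤ => (-Complex.I) * k * ((|k + (n:ℤ)| : ℤ) : ℂ) * S k) 0 := by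
    have h0 := hasSum_ortho hu'2 hv2 horth (n:ℤ)
    have hfe : (fun k : ℤ => ∑ i : Fin m,
        conj (circleFourierCoeff u' k i) * circleFourierCoeff v (k + (n:ℤ)) i)
        = fun k => (-Complex.I) * k * ((|k + (n:ℤ)| : ℤ) : ℂ) * S k := by
      funext k
      have hterm : ∀ i : Fin m,
          conj (circleFourierCoeff u' k i) * circleFourierCoeff v (k + (n:ℤ)) i
          = (-Complex.I) * k * ((|k + (n:ℤ)| : ℤ) : ℂ)
            * (circleFourierCoeff u (-k) i * circleFourierCoeff u (k + (n:ℤ)) i) := by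
        intro i
        rw [circleFourierCoeff_deriv hu2 hu'2 hweak k i, hhalf (k + (n:ℤ)) i,
          map_mul, map_mul, Complex.conj_I, map_intCast, ← circleFourierCoeff_neg]
        ring
      rw [Finset.sum_congr rfl fun i _ => hterm i, ← Finset.mul_sum, hSdef]
    rwa [hfe] at h0
  have hS : ∀ k, S (-(n:ℤ) - k) = S k := by
    intro k
    rw [hSdef]
    simp only []
    rw [show -(-(n:ℤ) - k) = k + (n:ℤ) by ring, show (-(n:ℤ) - k) + (n:ℤ) = -k by ring]
    exact Finset.sum_congr rfl fun i _ => mul_comm _ _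
  have hkey := tail_cancel (n:ℤ) (by omega) S hS ht
  have himg : (Finset.Ico (1:ℕ) n).image (fun j : ℕ => (j:ℤ)) = Finset.Ico (1:ℤ) (n:ℤ) := by
    ext k
    simp only [Finset.mem_image, Finset.mem_Ico]
    constructor
    · rintro ⟨j, ⟨h1, h2⟩, rfl⟩; omega
    · intro hk; exact ⟨k.toNat, by omega, by omega⟩
  rw [← himg, Finset.sum_image (fun a _ b _ h => by omega)] at hkey
  have hre := congrArg Complex.re hkey
  rw [Complex.re_sum] at hre
  rw [show (0:ℂ).re = 0 from rfl] at hre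
  rw [← hre]
  refine Finset.sum_congr rfl fun k hk => ?_
  rw [Finset.mem_Ico] at hk
  -- per-term computation
  have hcast : ((-(k:ℤ)) + (n:ℤ)) = (((n - k : ℕ) : ℤ)) := by
    have : k ≤ n := by omega
    push_cast [Nat.cast_sub this]
    ring
  have hterm : (Complex.I * (k:ℤ) * ((n:ℤ) - (k:ℤ)) * S (-(k:ℤ)))
      = Complex.I * (((n - k) * k : ℕ) : ℂ) * ∑ i : Fin m,
        (((cosCoeff u k i : ℝ) : ℂ) - Complex.I * ((sinCoeff u k i : ℝ) : ℂ))
          * (((cosCoeff u (n - k) i : ℝ) : ℂ) - Complex.I * ((sinCoeff u (n - k) i : ℝ) : ℂ)) := by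
    rw [hSdef]
    simp only []
    rw [neg_neg, hcast]
    rw [Finset.sum_congr rfl fun i _ => by
      rw [circleFourierCoeff_natCast hu2 k i, circleFourierCoeff_natCast hu2 (n - k) i]]
    push_cast [Nat.cast_sub (by omega : k ≤ n)]
    ring
  rw [hterm]
  -- real part: (I * c * z).re = -c * z.im
  have him : (Complex.I * (((n - k) * k : ℕ) : ℂ) * ∑ i : Fin m,
        (((cosCoeff u k i : ℝ) : ℂ) - Complex.I * ((sinCoeff u k i : ℝ) : ℂ))
          * (((cosCoeff u (n - k) i : ℝ) : ℂ) - Complex.I * ((sinCoeff u (n - k) i : ℝ) : ℂ))).re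
      = -(((n - k) * k : ℕ) : ℝ) * (∑ i : Fin m,
        (((cosCoeff u k i : ℝ) : ℂ) - Complex.I * ((sinCoeff u k i : ℝ) : ℂ))
          * (((cosCoeff u (n - k) i : ℝ) : ℂ) - Complex.I * ((sinCoeff u (n - k) i : ℝ) : ℂ))).im := by
    set z := ∑ i : Fin m,
        (((cosCoeff u k i : ℝ) : ℂ) - Complex.I * ((sinCoeff u k i : ℝ) : ℂ))
          * (((cosCoeff u (n - k) i : ℝ) : ℂ) - Complex.I * ((sinCoeff u (n - k) i : ℝ) : ℂ))
    simp [Complex.mul_re, Complex.mul_im]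
  rw [him, Complex.im_sum]
  have himterm : ∀ i : Fin m,
      ((((cosCoeff u k i : ℝ) : ℂ) - Complex.I * ((sinCoeff u k i : ℝ) : ℂ))
          * (((cosCoeff u (n - k) i : ℝ) : ℂ) - Complex.I * ((sinCoeff u (n - k) i : ℝ) : ℂ))).im
      = -(cosCoeff u k i * sinCoeff u (n - k) i + sinCoeff u k i * cosCoeff u (n - k) i) := by
    intro i
    simp [Complex.mul_im, Complex.mul_re]
    ring
  rw [Finset.sum_congr rfl fun i _ => himterm i]
  have hinner1 : (inner ℝ (cosCoeff u k) (sinCoeff u (n - k)) : ℝ)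
      = ∑ i : Fin m, cosCoeff u k i * sinCoeff u (n - k) i := by
    simp [PiLp.inner_apply, RCLike.inner_apply]
    exact Finset.sum_congr rfl fun i _ => mul_comm _ _
  have hinner2 : (inner ℝ (sinCoeff u k) (cosCoeff u (n - k)) : ℝ)
      = ∑ i : Fin m, sinCoeff u k i * cosCoeff u (n - k) i := by
    simp [PiLp.inner_apply, RCLike.inner_apply]
    exact Finset.sum_congr rfl fun i _ => mul_comm _ _
  rw [hinner1, hinner2, ← Finset.sum_add_distrib]
  rw [Finset.mul_sum, Finset.mul_sum]
  refine Finset.sum_congr rfl fun i _ => ?_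
  ring

end
end

section
/- (First Fourier mode constraints.) Let u ∈ W^{1,2}(S¹, ℝ^m) and suppose there exists v ∈ L²(S¹, ℝ^m) whose Fourier coefficients satisfy v̂(n) = |n|·û(n) for all n ∈ ℤ (componentwise), and such that u'(θ) · v(θ) = 0 for almost every θ. Then, with a₁ = (1/2π)∫₀^{2π} u(θ) cos θ dθ and b₁ = (1/2π)∫₀^{2π} u(θ) sin θ dθ, one has |a₁| = |b₁| and a₁ · b₁ = 0. -/
open Real MeasureTheory intervalIntegral

namespace FFMAux

open Complex AddCircle
open scoped ComplexConjugate

local instance : Fact (0 < 2 * Real.pi) := ⟨by positivity⟩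

/-- the "unlift" map from the circle back to `(0, 2π]` is measure preserving. -/
lemma mp_unlift : MeasurePreserving
    (fun x : AddCircle (2 * π) => ((AddCircle.equivIoc (2 * π) 0 x : Set.Ioc (0:ℝ) (0 + 2 * π)) : ℝ))
    volume (volume.restrict (Set.Ioc (0:ℝ) (0 + 2 * π))) := by
  have hmeas : Measurable
      (fun x : AddCircle (2 * π) => ((AddCircle.equivIoc (2 * π) 0 x :
        Set.Ioc (0:ℝ) (0 + 2 * π)) : ℝ)) :=
    measurable_subtype_coe.comp (AddCircle.measurableEquivIoc (2 * π) 0).measurable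
  refine ⟨hmeas, ?_⟩
  have hmk := AddCircle.measurePreserving_mk (2 * π) 0
  rw [← hmk.map_eq, Measure.map_map hmeas AddCircle.measurable_mk']
  have hae : ((fun x : AddCircle (2 * π) => ((AddCircle.equivIoc (2 * π) 0 x :
        Set.Ioc (0:ℝ) (0 + 2 * π)) : ℝ)) ∘ (fun θ : ℝ => (θ : AddCircle (2 * π))))
      =ᵐ[volume.restrict (Set.Ioc (0:ℝ) (0 + 2 * π))] id := by
    filter_upwards [ae_restrict_mem measurableSet_Ioc] with θ hθ
    have : (AddCircle.equivIoc (2 * π) 0) (θ : AddCircle (2 * π)) = ⟨θ, hθ⟩ := by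
      rw [Equiv.apply_eq_iff_eq_symm_apply]; rfl
    simp only [Function.comp_apply, this, id_eq]
  rw [Measure.map_congr hae, Measure.map_id]

lemma haar_eq : (haarAddCircle : Measure (AddCircle (2 * π)))
    = (ENNReal.ofReal (2 * π))⁻¹ • (volume : Measure (AddCircle (2 * π))) := by
  rw [AddCircle.volume_eq_smul_haarAddCircle, smul_smul, ENNReal.inv_mul_cancel, one_smul]
  · simp [Real.pi_pos, Real.pi_ne_zero]
  · exact ENNReal.ofReal_ne_top

lemma memLp_lift {f : ℝ → ℂ} (hf : MemLp f 2 (volume.restrict (Set.Ioc (0:ℝ) (2 * π)))) :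
    MemLp (AddCircle.liftIoc (2 * π) 0 f) 2 (@haarAddCircle (2 * π) _) := by
  have hf' : MemLp f 2 (volume.restrict (Set.Ioc (0:ℝ) (0 + 2 * π))) := by
    rw [zero_add]; exact hf
  have h1 := hf'.comp_measurePreserving mp_unlift
  have heq : (f ∘ fun x : AddCircle (2 * π) => ((AddCircle.equivIoc (2 * π) 0 x :
      Set.Ioc (0:ℝ) (0 + 2 * π)) : ℝ)) = AddCircle.liftIoc (2 * π) 0 f := rfl
  rw [heq] at h1
  rw [haar_eq]
  exact h1.smul_measure (by simp [Real.pi_pos])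

/-- identification of `fourierCoeff` of the lift with the explicit formula. -/
lemma fourierCoeff_lift (f : ℝ → ℂ) (n : ℤ) :
    fourierCoeff (AddCircle.liftIoc (2 * π) 0 f) n
      = (1 / (2 * π) : ℂ) * ∫ θ in (0:ℝ)..(2 * π),
          f θ * Complex.exp (-(n : ℂ) * (θ : ℂ) * Complex.I) := by
  rw [fourierCoeff_liftIoc_eq, fourierCoeffOn_eq_integral]
  have hπ : (π : ℂ) ≠ 0 := by exact_mod_cast Real.pi_ne_zero
  have h1 : ∀ θ ∈ Set.uIcc (0:ℝ) (2 * π), (@fourier (2 * π) (-n) (θ : AddCircle (2 * π))) • f θ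
      = f θ * Complex.exp (-(n : ℂ) * (θ : ℂ) * Complex.I) := by
    intro θ _
    rw [fourier_coe_apply, smul_eq_mul, mul_comm]
    congr 2
    push_cast
    field_simp
  rw [sub_zero, zero_add, intervalIntegral.integral_congr h1, Complex.real_smul]
  push_cast
  ring

lemma fourierCoeff_conj (F : AddCircle (2 * π) → ℂ) (n : ℤ) :
    fourierCoeff (fun x => conj (F x)) n = conj (fourierCoeff F (-n)) := by
  rw [fourierCoeff, fourierCoeff, ← integral_conj]
  apply MeasureTheory.integral_congr_ae
  filter_upwards with x
  rw [smul_eq_mul, smul_eq_mul, map_mul, neg_neg, ← fourier_neg]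

lemma fourierCoeff_mul_fourier (F : AddCircle (2 * π) → ℂ) (k n : ℤ) :
    fourierCoeff (fun x => fourier k x * F x) n = fourierCoeff F (n - k) := by
  rw [fourierCoeff, fourierCoeff]
  apply MeasureTheory.integral_congr_ae
  filter_upwards with x
  rw [smul_eq_mul, smul_eq_mul, ← mul_assoc, ← fourier_add,
    show -n + k = -(n - k) from by ring]

lemma hasSum_pairing {P Q : AddCircle (2 * π) → ℂ}
    (hP : MemLp P 2 (@haarAddCircle (2 * π) _)) (hQ : MemLp Q 2 (@haarAddCircle (2 * π) _)) :
    HasSum (fun n : ℤ => conj (fourierCoeff P n) * fourierCoeff Q n)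
      (∫ x, conj (P x) * Q x ∂(@haarAddCircle (2 * π) _)) := by
  set f := hP.toLp P with hf
  set g := hQ.toLp Q with hg
  have hcoeP : ∀ n : ℤ, fourierCoeff (f : AddCircle (2 * π) → ℂ) n = fourierCoeff P n := by
    intro n
    apply MeasureTheory.integral_congr_ae
    filter_upwards [hP.coeFn_toLp] with x hx
    rw [hx]
  have hcoeQ : ∀ n : ℤ, fourierCoeff (g : AddCircle (2 * π) → ℂ) n = fourierCoeff Q n := by
    intro n
    apply MeasureTheory.integral_congr_ae
    filter_upwards [hQ.coeFn_toLp] with x hx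
    rw [hx]
  have h := fourierBasis.hasSum_inner_mul_inner f g
  have h1 : ∀ n : ℤ, (inner ℂ f (fourierBasis n) : ℂ) = conj (fourierCoeff P n) := by
    intro n
    rw [← inner_conj_symm, ← fourierBasis.repr_apply_apply, fourierBasis_repr, hcoeP]
  have h2 : ∀ n : ℤ, (inner ℂ (fourierBasis n) g : ℂ) = fourierCoeff Q n := by
    intro n
    rw [← fourierBasis.repr_apply_apply, fourierBasis_repr, hcoeQ]
  have h3 : (inner ℂ f g : ℂ) = ∫ x, conj (P x) * Q x ∂(@haarAddCircle (2 * π) _) := by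
    rw [MeasureTheory.L2.inner_def]
    apply MeasureTheory.integral_congr_ae
    filter_upwards [hP.coeFn_toLp, hQ.coeFn_toLp] with x hx hy
    rw [RCLike.inner_apply, hx, hy, mul_comm]
  simp_rw [h1, h2, h3] at h
  exact h

variable {m : ℕ}

lemma isFinite : IsFiniteMeasure (volume.restrict (Set.Ioc (0:ℝ) (2 * π))) := by
  constructor
  rw [Measure.restrict_apply_univ]
  exact measure_Ioc_lt_top

lemma memLp_proj {w : ℝ → EuclideanSpace ℝ (Fin m)}
    (hw : MemLp w 2 (volume.restrict (Set.Ioc (0:ℝ) (2 * π)))) (i : Fin m) :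
    MemLp (fun θ => w θ i) 2 (volume.restrict (Set.Ioc (0:ℝ) (2 * π))) :=
  (EuclideanSpace.proj (𝕜 := ℝ) i).comp_memLp' hw

lemma memLp_projC {w : ℝ → EuclideanSpace ℝ (Fin m)}
    (hw : MemLp w 2 (volume.restrict (Set.Ioc (0:ℝ) (2 * π)))) (i : Fin m) :
    MemLp (fun θ => ((w θ i : ℝ) : ℂ)) 2 (volume.restrict (Set.Ioc (0:ℝ) (2 * π))) :=
  (Complex.ofRealCLM.comp (EuclideanSpace.proj (𝕜 := ℝ) i)).comp_memLp' hw

lemma II_smul {E : Type*} [NormedAddCommGroup E] [NormedSpace ℝ E] {w : ℝ → E}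
    (hw : MemLp w 2 (volume.restrict (Set.Ioc (0:ℝ) (2 * π)))) {φ : ℝ → ℝ}
    (hφ : Continuous φ) (hb : ∀ x, |φ x| ≤ 1) :
    IntervalIntegrable (fun θ => φ θ • w θ) volume 0 (2 * π) := by
  haveI := isFinite
  rw [intervalIntegrable_iff_integrableOn_Ioc_of_le (by positivity)]
  have hint : Integrable w (volume.restrict (Set.Ioc (0:ℝ) (2 * π))) := hw.integrable one_le_two
  exact hint.smul_of_top_right
    (memLp_top_of_bound hφ.aestronglyMeasurable 1 (ae_of_all _ fun x => by simpa using hb x))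

lemma II_mul {w : ℝ → EuclideanSpace ℝ (Fin m)}
    (hw : MemLp w 2 (volume.restrict (Set.Ioc (0:ℝ) (2 * π)))) {φ : ℝ → ℝ}
    (hφ : Continuous φ) (hb : ∀ x, |φ x| ≤ 1) (i : Fin m) :
    IntervalIntegrable (fun θ => φ θ * w θ i) volume 0 (2 * π) :=
  II_smul (memLp_proj hw i) hφ hb

lemma proj_intervalIntegral {w : ℝ → EuclideanSpace ℝ (Fin m)} {φ : ℝ → ℝ}
    (h : IntervalIntegrable (fun θ => φ θ • w θ) volume 0 (2 * π)) (i : Fin m) :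
    (∫ θ in (0:ℝ)..(2 * π), φ θ • w θ) i = ∫ θ in (0:ℝ)..(2 * π), φ θ * w θ i := by
  have := ((EuclideanSpace.proj (𝕜 := ℝ) i).intervalIntegral_comp_comm h).symm
  simpa [smul_eq_mul] using this

lemma cfc_eq {w : ℝ → EuclideanSpace ℝ (Fin m)}
    (hw : MemLp w 2 (volume.restrict (Set.Ioc (0:ℝ) (2 * π)))) (n : ℤ) (i : Fin m) :
    circleFourierCoeff w n i
      = (1 / (2 * π) : ℂ) *
        (((∫ θ in (0:ℝ)..(2 * π), Real.cos (n * θ) * w θ i : ℝ) : ℂ)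
          - ((∫ θ in (0:ℝ)..(2 * π), Real.sin (n * θ) * w θ i : ℝ) : ℂ) * Complex.I) := by
  have hcos : Continuous fun θ : ℝ => Real.cos (n * θ) :=
    Real.continuous_cos.comp (continuous_const.mul continuous_id)
  have hsin : Continuous fun θ : ℝ => Real.sin (n * θ) :=
    Real.continuous_sin.comp (continuous_const.mul continuous_id)
  have hIc := II_mul hw hcos (fun x => Real.abs_cos_le_one _) i
  have hIs := II_mul hw hsin (fun x => Real.abs_sin_le_one _) i
  have hIcC : IntervalIntegrable (fun θ => ((Real.cos (n * θ) * w θ i : ℝ) : ℂ))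
      volume 0 (2 * π) := by
    rw [intervalIntegrable_iff] at hIc ⊢
    exact hIc.ofReal
  have hIsC : IntervalIntegrable (fun θ => ((Real.sin (n * θ) * w θ i : ℝ) : ℂ) * Complex.I)
      volume 0 (2 * π) := by
    rw [intervalIntegrable_iff] at hIs ⊢
    exact (hIs.ofReal (𝕜 := ℂ)).mul_const _
  rw [circleFourierCoeff]
  congr 1
  have h1 : ∀ θ ∈ Set.uIcc (0:ℝ) (2 * π),
      ((w θ i : ℝ) : ℂ) * Complex.exp (-(n : ℂ) * (θ : ℂ) * Complex.I)
      = ((Real.cos (n * θ) * w θ i : ℝ) : ℂ)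
          - ((Real.sin (n * θ) * w θ i : ℝ) : ℂ) * Complex.I := by
    intro θ _
    have h2 : (-(n : ℂ) * (θ : ℂ) * Complex.I) = ((-(n * θ) : ℝ) : ℂ) * Complex.I := by
      push_cast; ring
    rw [h2, Complex.exp_mul_I, ← Complex.ofReal_cos, ← Complex.ofReal_sin,
      Real.cos_neg, Real.sin_neg]
    push_cast
    ring
  rw [intervalIntegral.integral_congr h1, intervalIntegral.integral_sub hIcC hIsC,
    intervalIntegral.integral_mul_const, intervalIntegral.integral_ofReal,
    intervalIntegral.integral_ofReal]

end FFMAux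

set_option maxHeartbeats 1000000 in
/-- **First Fourier mode constraints.** Under the half-harmonicity conditions,
the first Fourier coefficients satisfy `|a₁| = |b₁|` and `a₁ · b₁ = 0`. -/
theorem first_fourier_mode_constraints {m : ℕ}
    (u u' v : ℝ → EuclideanSpace ℝ (Fin m))
    (hu_per : Function.Periodic u (2 * π))
    (hu'_per : Function.Periodic u' (2 * π))
    (hv_per : Function.Periodic v (2 * π))
    (hu2 : MemLp u 2 (volume.restrict (Set.Ioc (0:ℝ) (2 * π))))
    (hu'2 : MemLp u' 2 (volume.restrict (Set.Ioc (0:ℝ) (2 * π))))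
    (hv2 : MemLp v 2 (volume.restrict (Set.Ioc (0:ℝ) (2 * π))))
    (hweak : ∀ φ : ℝ → ℝ, ContDiff ℝ (⊤ : ℕ∞) φ → Function.Periodic φ (2 * π) →
      (∫ θ in (0:ℝ)..(2 * π), φ θ • u' θ) = -∫ θ in (0:ℝ)..(2 * π), deriv φ θ • u θ)
    (hhalf : ∀ (n : ℤ) (i : Fin m),
      circleFourierCoeff v n i = ((|n| : ℤ) : ℂ) * circleFourierCoeff u n i)
    (horth : ∀ᵐ θ : ℝ, inner ℝ (u' θ) (v θ) = (0 : ℝ)) :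
    ‖cosCoeff u 1‖ = ‖sinCoeff u 1‖ ∧ (inner ℝ (cosCoeff u 1) (sinCoeff u 1) : ℝ) = 0 := by
  haveI : Fact (0 < 2 * π) := ⟨by positivity⟩
  classical
  open Complex AddCircle FFMAux in
  open scoped ComplexConjugate in
  -- Step 1 : integration by parts: the Fourier coefficients of `u'`.
  have hderiv : ∀ (n : ℤ) (i : Fin m),
      circleFourierCoeff u' n i = Complex.I * (n : ℂ) * circleFourierCoeff u n i := by
    intro n i
    have hcos : Continuous fun θ : ℝ => Real.cos (n * θ) :=
      Real.continuous_cos.comp (continuous_const.mul continuous_id)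
    have hsin : Continuous fun θ : ℝ => Real.sin (n * θ) :=
      Real.continuous_sin.comp (continuous_const.mul continuous_id)
    have h0 : ∀ θ : ℝ, HasDerivAt (fun x : ℝ => (n : ℝ) * x) n θ := fun θ => by
      simpa using (hasDerivAt_id θ).const_mul (n : ℝ)
    have hEc : (∫ θ in (0:ℝ)..(2 * π), Real.cos (n * θ) * u' θ i)
        = n * ∫ θ in (0:ℝ)..(2 * π), Real.sin (n * θ) * u θ i := by
      have hd : ∀ θ : ℝ, HasDerivAt (fun θ : ℝ => Real.cos (n * θ))
          (-Real.sin (n * θ) * n) θ := fun θ => by simpa using (h0 θ).cos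
      have hsmooth : ContDiff ℝ (⊤ : ℕ∞) fun θ : ℝ => Real.cos (n * θ) :=
        Real.contDiff_cos.comp (contDiff_const.mul contDiff_id)
      have hper : Function.Periodic (fun θ : ℝ => Real.cos (n * θ)) (2 * π) := by
        intro x
        simp only [mul_add]
        rw [show (n : ℝ) * (2 * π) = (n : ℤ) * (2 * π) by norm_num,
          Real.cos_add_int_mul_two_pi]
      have h1 := hweak _ hsmooth hper
      have h2 : (∫ θ in (0:ℝ)..(2 * π), deriv (fun θ : ℝ => Real.cos (n * θ)) θ • u θ)
          = ∫ θ in (0:ℝ)..(2 * π), (-(n : ℝ)) • (Real.sin (n * θ) • u θ) := by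
        apply intervalIntegral.integral_congr
        intro θ _
        show deriv (fun θ : ℝ => Real.cos (n * θ)) θ • u θ
          = (-(n : ℝ)) • (Real.sin (n * θ) • u θ)
        rw [(hd θ).deriv, smul_smul]
        congr 1
        ring
      rw [h2, intervalIntegral.integral_smul, neg_smul, neg_neg] at h1
      have hL := FFMAux.proj_intervalIntegral
        (FFMAux.II_smul hu'2 hcos (fun x => Real.abs_cos_le_one _)) i
      have hR := FFMAux.proj_intervalIntegral
        (FFMAux.II_smul hu2 hsin (fun x => Real.abs_sin_le_one _)) i
      calc (∫ θ in (0:ℝ)..(2 * π), Real.cos (n * θ) * u' θ i)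
          = (∫ θ in (0:ℝ)..(2 * π), Real.cos (n * θ) • u' θ) i := hL.symm
        _ = ((n : ℝ) • ∫ θ in (0:ℝ)..(2 * π), Real.sin (n * θ) • u θ) i := by rw [h1]
        _ = n * ∫ θ in (0:ℝ)..(2 * π), Real.sin (n * θ) * u θ i := by
            rw [PiLp.smul_apply, smul_eq_mul, hR]
    have hEs : (∫ θ in (0:ℝ)..(2 * π), Real.sin (n * θ) * u' θ i)
        = -(n * ∫ θ in (0:ℝ)..(2 * π), Real.cos (n * θ) * u θ i) := by
      have hd : ∀ θ : ℝ, HasDerivAt (fun θ : ℝ => Real.sin (n * θ))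
          (Real.cos (n * θ) * n) θ := fun θ => by simpa using (h0 θ).sin
      have hsmooth : ContDiff ℝ (⊤ : ℕ∞) fun θ : ℝ => Real.sin (n * θ) :=
        Real.contDiff_sin.comp (contDiff_const.mul contDiff_id)
      have hper : Function.Periodic (fun θ : ℝ => Real.sin (n * θ)) (2 * π) := by
        intro x
        simp only [mul_add]
        rw [show (n : ℝ) * (2 * π) = (n : ℤ) * (2 * π) by norm_num,
          Real.sin_add_int_mul_two_pi]
      have h1 := hweak _ hsmooth hper
      have h2 : (∫ θ in (0:ℝ)..(2 * π), deriv (fun θ : ℝ => Real.sin (n * θ)) θ • u θ)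
          = ∫ θ in (0:ℝ)..(2 * π), ((n : ℝ)) • (Real.cos (n * θ) • u θ) := by
        apply intervalIntegral.integral_congr
        intro θ _
        show deriv (fun θ : ℝ => Real.sin (n * θ)) θ • u θ
          = ((n : ℝ)) • (Real.cos (n * θ) • u θ)
        rw [(hd θ).deriv, smul_smul]
        congr 1
        ring
      rw [h2, intervalIntegral.integral_smul] at h1
      have hL := FFMAux.proj_intervalIntegral
        (FFMAux.II_smul hu'2 hsin (fun x => Real.abs_sin_le_one _)) i
      have hR := FFMAux.proj_intervalIntegral
        (FFMAux.II_smul hu2 hcos (fun x => Real.abs_cos_le_one _)) i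
      calc (∫ θ in (0:ℝ)..(2 * π), Real.sin (n * θ) * u' θ i)
          = (∫ θ in (0:ℝ)..(2 * π), Real.sin (n * θ) • u' θ) i := hL.symm
        _ = (-((n : ℝ) • ∫ θ in (0:ℝ)..(2 * π), Real.cos (n * θ) • u θ)) i := by rw [h1]
        _ = -(n * ∫ θ in (0:ℝ)..(2 * π), Real.cos (n * θ) * u θ i) := by
            rw [PiLp.neg_apply, PiLp.smul_apply, smul_eq_mul, hR]
    rw [FFMAux.cfc_eq hu'2 n i, FFMAux.cfc_eq hu2 n i, hEc, hEs]
    push_cast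
    linear_combination ((π : ℂ))⁻¹ * (1 / 2) * (n : ℂ) *
      ((∫ θ in (0:ℝ)..(2 * π), Real.sin (n * θ) * u θ i : ℝ) : ℂ) * Complex.I_sq
  -- Step 2 : lift everything to the circle
  have hPmem : ∀ i : Fin m, MemLp (AddCircle.liftIoc (2 * π) 0 (fun θ => ((u' θ i : ℝ) : ℂ)))
      2 (@AddCircle.haarAddCircle (2 * π) _) :=
    fun i => FFMAux.memLp_lift (FFMAux.memLp_projC hu'2 i)
  have hQmem : ∀ i : Fin m, MemLp (AddCircle.liftIoc (2 * π) 0 (fun θ => ((v θ i : ℝ) : ℂ)))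
      2 (@AddCircle.haarAddCircle (2 * π) _) :=
    fun i => FFMAux.memLp_lift (FFMAux.memLp_projC hv2 i)
  have hPhat : ∀ (k : ℤ) (i : Fin m),
      fourierCoeff (AddCircle.liftIoc (2 * π) 0 (fun θ => ((u' θ i : ℝ) : ℂ))) k
        = Complex.I * (k : ℂ) * circleFourierCoeff u k i :=
    fun k i => (FFMAux.fourierCoeff_lift _ k).trans (hderiv k i)
  have hQhat : ∀ (k : ℤ) (i : Fin m),
      fourierCoeff (AddCircle.liftIoc (2 * π) 0 (fun θ => ((v θ i : ℝ) : ℂ))) k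
        = ((|k| : ℤ) : ℂ) * circleFourierCoeff u k i :=
    fun k i => (FFMAux.fourierCoeff_lift _ k).trans (hhalf k i)
  have hfb : MemLp (fun x : AddCircle (2 * π) => (fourier (-2) x : ℂ)) ⊤
      (@AddCircle.haarAddCircle (2 * π) _) :=
    memLp_top_of_bound (map_continuous (@fourier (2 * π) (-2))).aestronglyMeasurable 1
      (ae_of_all _ fun x => by
        rw [fourier_apply]
        exact le_of_eq (Circle.norm_coe _))
  have hQ'mem : ∀ i : Fin m, MemLp (fun x : AddCircle (2 * π) =>
      fourier (-2) x * AddCircle.liftIoc (2 * π) 0 (fun θ => ((v θ i : ℝ) : ℂ)) x) 2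
      (@AddCircle.haarAddCircle (2 * π) _) := by
    intro i
    have h := (hQmem i).smul (r := 2) hfb
    exact h
  have hconjP : ∀ i : Fin m,
      (fun x : AddCircle (2 * π) =>
        (starRingEnd ℂ) (AddCircle.liftIoc (2 * π) 0 (fun θ => ((u' θ i : ℝ) : ℂ)) x))
      = AddCircle.liftIoc (2 * π) 0 (fun θ => ((u' θ i : ℝ) : ℂ)) := by
    intro i; funext x; exact Complex.conj_ofReal _
  -- Step 3 : the Parseval pairing for each component
  have hpair : ∀ i : Fin m, HasSum
      (fun n : ℤ => Complex.I * (-(n : ℂ)) * circleFourierCoeff u (-n) i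
        * (((|n + 2| : ℤ) : ℂ) * circleFourierCoeff u (n + 2) i))
      (∫ x, (starRingEnd ℂ) (AddCircle.liftIoc (2 * π) 0 (fun θ => ((u' θ i : ℝ) : ℂ)) x)
        * (fourier (-2) x * AddCircle.liftIoc (2 * π) 0 (fun θ => ((v θ i : ℝ) : ℂ)) x)
        ∂(@AddCircle.haarAddCircle (2 * π) _)) := by
    intro i
    have h := FFMAux.hasSum_pairing (hPmem i) (hQ'mem i)
    have hterm : (fun n : ℤ =>
        (starRingEnd ℂ) (fourierCoeff (AddCircle.liftIoc (2 * π) 0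
            (fun θ => ((u' θ i : ℝ) : ℂ))) n)
          * fourierCoeff (fun x => fourier (-2) x
              * AddCircle.liftIoc (2 * π) 0 (fun θ => ((v θ i : ℝ) : ℂ)) x) n)
        = fun n : ℤ => Complex.I * (-(n : ℂ)) * circleFourierCoeff u (-n) i
            * (((|n + 2| : ℤ) : ℂ) * circleFourierCoeff u (n + 2) i) := by
      funext n
      have h1 : (starRingEnd ℂ) (fourierCoeff (AddCircle.liftIoc (2 * π) 0
          (fun θ => ((u' θ i : ℝ) : ℂ))) n)
          = fourierCoeff (AddCircle.liftIoc (2 * π) 0 (fun θ => ((u' θ i : ℝ) : ℂ))) (-n) := by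
        have h2 := FFMAux.fourierCoeff_conj
          (AddCircle.liftIoc (2 * π) 0 (fun θ => ((u' θ i : ℝ) : ℂ))) (-n)
        rw [neg_neg, hconjP i] at h2
        exact h2.symm
      rw [h1, FFMAux.fourierCoeff_mul_fourier _ (-2) n, sub_neg_eq_add,
        hPhat (-n) i, hQhat (n + 2) i]
      push_cast
      ring
    rwa [hterm] at h
  -- Step 4 : the total sum vanishes
  have hGlift : AddCircle.liftIoc (2 * π) 0 (fun θ => ((inner ℝ (u' θ) (v θ) : ℝ) : ℂ))
      =ᵐ[@AddCircle.haarAddCircle (2 * π) _] 0 := by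
    have hG : (fun θ : ℝ => ((inner ℝ (u' θ) (v θ) : ℝ) : ℂ))
        =ᵐ[volume.restrict (Set.Ioc (0:ℝ) (0 + 2 * π))] 0 := by
      apply ae_restrict_of_ae
      filter_upwards [horth] with θ hθ
      simp [hθ]
    have h1 := FFMAux.mp_unlift.quasiMeasurePreserving.ae_eq_comp hG
    rw [FFMAux.haar_eq]
    exact MeasureTheory.Measure.ae_smul_measure (by filter_upwards [h1] with x hx; exact hx) _
  have hptwise : ∀ x : AddCircle (2 * π),
      (∑ i : Fin m, (starRingEnd ℂ)
          (AddCircle.liftIoc (2 * π) 0 (fun θ => ((u' θ i : ℝ) : ℂ)) x)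
        * (fourier (-2) x * AddCircle.liftIoc (2 * π) 0 (fun θ => ((v θ i : ℝ) : ℂ)) x))
      = fourier (-2) x
        * AddCircle.liftIoc (2 * π) 0 (fun θ => ((inner ℝ (u' θ) (v θ) : ℝ) : ℂ)) x := by
    intro x
    show (∑ i : Fin m, (starRingEnd ℂ)
          (((u' ((AddCircle.equivIoc (2 * π) 0 x : Set.Ioc (0:ℝ) (0 + 2 * π)) : ℝ) i : ℝ) : ℂ))
        * (fourier (-2) x
          * ((v ((AddCircle.equivIoc (2 * π) 0 x : Set.Ioc (0:ℝ) (0 + 2 * π)) : ℝ) i : ℝ) : ℂ)))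
      = fourier (-2) x * ((inner ℝ
          (u' ((AddCircle.equivIoc (2 * π) 0 x : Set.Ioc (0:ℝ) (0 + 2 * π)) : ℝ))
          (v ((AddCircle.equivIoc (2 * π) 0 x : Set.Ioc (0:ℝ) (0 + 2 * π)) : ℝ)) : ℝ) : ℂ)
    set θ : ℝ := ((AddCircle.equivIoc (2 * π) 0 x : Set.Ioc (0:ℝ) (0 + 2 * π)) : ℝ)
    have hin : (inner ℝ (u' θ) (v θ) : ℝ) = ∑ i : Fin m, u' θ i * v θ i := by
      simp [PiLp.inner_apply, RCLike.inner_apply]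
      exact Finset.sum_congr rfl fun i _ => mul_comm _ _
    rw [hin]
    push_cast
    rw [Finset.mul_sum]
    apply Finset.sum_congr rfl
    intro i _
    rw [Complex.conj_ofReal]
    ring
  have hint : ∀ i : Fin m, Integrable (fun x : AddCircle (2 * π) =>
      (starRingEnd ℂ) (AddCircle.liftIoc (2 * π) 0 (fun θ => ((u' θ i : ℝ) : ℂ)) x)
        * (fourier (-2) x * AddCircle.liftIoc (2 * π) 0 (fun θ => ((v θ i : ℝ) : ℂ)) x))
      (@AddCircle.haarAddCircle (2 * π) _) := by
    intro i
    have h1 : MemLp (fun x : AddCircle (2 * π) =>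
        (starRingEnd ℂ) (AddCircle.liftIoc (2 * π) 0 (fun θ => ((u' θ i : ℝ) : ℂ)) x)) 2
        (@AddCircle.haarAddCircle (2 * π) _) := by
      rw [hconjP i]; exact hPmem i
    have h2 := (hQ'mem i).smul (r := 1) h1
      (hpqr := ⟨by rw [inv_one]; exact ENNReal.inv_two_add_inv_two⟩)
    rw [← memLp_one_iff_integrable]
    exact h2
  have hRHS0 : (∑ i : Fin m, ∫ x, (starRingEnd ℂ)
        (AddCircle.liftIoc (2 * π) 0 (fun θ => ((u' θ i : ℝ) : ℂ)) x)
      * (fourier (-2) x * AddCircle.liftIoc (2 * π) 0 (fun θ => ((v θ i : ℝ) : ℂ)) x)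
      ∂(@AddCircle.haarAddCircle (2 * π) _)) = 0 := by
    rw [← integral_finset_sum _ (fun i _ => hint i)]
    have hz : (fun x : AddCircle (2 * π) => ∑ i : Fin m, (starRingEnd ℂ)
          (AddCircle.liftIoc (2 * π) 0 (fun θ => ((u' θ i : ℝ) : ℂ)) x)
        * (fourier (-2) x * AddCircle.liftIoc (2 * π) 0 (fun θ => ((v θ i : ℝ) : ℂ)) x))
        =ᵐ[@AddCircle.haarAddCircle (2 * π) _] 0 := by
      filter_upwards [hGlift] with x hx
      rw [hptwise x, hx]
      simp
    rw [MeasureTheory.integral_congr_ae hz]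
    simp
  have htot : HasSum (fun n : ℤ => ∑ i : Fin m,
      (Complex.I * (-(n : ℂ)) * circleFourierCoeff u (-n) i
        * (((|n + 2| : ℤ) : ℂ) * circleFourierCoeff u (n + 2) i))) 0 := by
    have h := hasSum_sum (f := fun (i : Fin m) (n : ℤ) =>
      Complex.I * (-(n : ℂ)) * circleFourierCoeff u (-n) i
        * (((|n + 2| : ℤ) : ℂ) * circleFourierCoeff u (n + 2) i))
      (s := Finset.univ) (fun i _ => hpair i)
    rwa [hRHS0] at h
    -- Step 5 : symmetrize the sum in `n`
  set d : ℤ → ℂ := fun n => ∑ i : Fin m,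
    circleFourierCoeff u (-n) i * circleFourierCoeff u (n + 2) i with hddef
  have htot' : HasSum (fun n : ℤ => Complex.I * (-(n : ℂ)) * ((|n + 2| : ℤ) : ℂ) * d n) 0 := by
    have heq : (fun n : ℤ => ∑ i : Fin m,
        (Complex.I * (-(n : ℂ)) * circleFourierCoeff u (-n) i
          * (((|n + 2| : ℤ) : ℂ) * circleFourierCoeff u (n + 2) i)))
        = fun n : ℤ => Complex.I * (-(n : ℂ)) * ((|n + 2| : ℤ) : ℂ) * d n := by
      funext n
      rw [hddef, Finset.mul_sum]
      apply Finset.sum_congr rfl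
      intro i _
      ring
    rwa [heq] at htot
  have hd_sym : ∀ n : ℤ, d (-2 - n) = d n := by
    intro n
    rw [hddef]
    simp only [show -(-2 - n) = n + 2 from by ring, show -2 - n + 2 = -n from by ring]
    exact Finset.sum_congr rfl fun i _ => mul_comm _ _
  have htot2 : HasSum (fun n : ℤ => Complex.I * ((n : ℂ) + 2) * ((|n| : ℤ) : ℂ) * d n) 0 := by
    have h := (Equiv.subLeft (-2 : ℤ)).hasSum_iff.mpr htot'
    have heq : ((fun n : ℤ => Complex.I * (-(n : ℂ)) * ((|n + 2| : ℤ) : ℂ) * d n)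
        ∘ (Equiv.subLeft (-2 : ℤ)))
        = fun n : ℤ => Complex.I * ((n : ℂ) + 2) * ((|n| : ℤ) : ℂ) * d n := by
      funext n
      simp only [Function.comp_apply, Equiv.subLeft_apply]
      rw [hd_sym n, show (-2 : ℤ) - n + 2 = -n from by ring, abs_neg]
      push_cast
      ring
    rwa [heq] at h
  have hadd := htot'.add htot2
  rw [add_zero] at hadd
  have hsingle_fun : (fun n : ℤ => Complex.I * (-(n : ℂ)) * ((|n + 2| : ℤ) : ℂ) * d n
      + Complex.I * ((n : ℂ) + 2) * ((|n| : ℤ) : ℂ) * d n)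
      = fun n : ℤ => Complex.I * (((-n * |n + 2| + (n + 2) * |n| : ℤ) : ℂ)) * d n := by
    funext n
    push_cast
    ring
  rw [hsingle_fun] at hadd
  have hκ : ∀ n : ℤ, n ≠ -1 → (-n * |n + 2| + (n + 2) * |n| : ℤ) = 0 := by
    intro n hn
    rcases le_or_gt 0 n with h | h
    · rw [abs_of_nonneg h, abs_of_nonneg (by omega : (0:ℤ) ≤ n + 2)]
      ring
    · rw [abs_of_nonpos (by omega : n ≤ 0), abs_of_nonpos (by omega : n + 2 ≤ 0)]
      ring
  have hone := hasSum_single (f := fun n : ℤ =>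
      Complex.I * (((-n * |n + 2| + (n + 2) * |n| : ℤ) : ℂ)) * d n) (-1)
    (fun n hn => by
      show Complex.I * (((-n * |n + 2| + (n + 2) * |n| : ℤ) : ℂ)) * d n = 0
      rw [hκ n hn]; simp)
  have hd1 : d (-1) = 0 := by
    have h0 := hadd.unique hone
    norm_num [Complex.ext_iff] at h0
    exact Complex.ext h0.1 h0.2
  -- Step 6 : express everything through the first cosine/sine coefficients
  have hA : ∀ i : Fin m, cosCoeff u 1 i
      = (1 / (2 * π)) * ∫ θ in (0:ℝ)..(2 * π), Real.cos (((1:ℤ) : ℝ) * θ) * u θ i := by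
    intro i
    have hcos1 : Continuous fun θ : ℝ => Real.cos (((1:ℕ) : ℝ) * θ) :=
      Real.continuous_cos.comp (continuous_const.mul continuous_id)
    rw [cosCoeff, PiLp.smul_apply, smul_eq_mul,
      FFMAux.proj_intervalIntegral (FFMAux.II_smul hu2 hcos1
        (fun x => Real.abs_cos_le_one _)) i]
    norm_num
  have hB : ∀ i : Fin m, sinCoeff u 1 i
      = (1 / (2 * π)) * ∫ θ in (0:ℝ)..(2 * π), Real.sin (((1:ℤ) : ℝ) * θ) * u θ i := by
    intro i
    have hsin1 : Continuous fun θ : ℝ => Real.sin (((1:ℕ) : ℝ) * θ) :=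
      Real.continuous_sin.comp (continuous_const.mul continuous_id)
    rw [sinCoeff, PiLp.smul_apply, smul_eq_mul,
      FFMAux.proj_intervalIntegral (FFMAux.II_smul hu2 hsin1
        (fun x => Real.abs_sin_le_one _)) i]
    norm_num
  have hc1 : ∀ i : Fin m, circleFourierCoeff u 1 i
      = ((cosCoeff u 1 i : ℝ) : ℂ) - ((sinCoeff u 1 i : ℝ) : ℂ) * Complex.I := by
    intro i
    rw [FFMAux.cfc_eq hu2 1 i, hA i, hB i]
    push_cast
    ring
  have hz : (∑ i : Fin m,
      ((((cosCoeff u 1 i : ℝ) : ℂ) - ((sinCoeff u 1 i : ℝ) : ℂ) * Complex.I)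
        * (((cosCoeff u 1 i : ℝ) : ℂ) - ((sinCoeff u 1 i : ℝ) : ℂ) * Complex.I))) = 0 := by
    have h5 : d (-1) = ∑ i : Fin m,
        ((((cosCoeff u 1 i : ℝ) : ℂ) - ((sinCoeff u 1 i : ℝ) : ℂ) * Complex.I)
          * (((cosCoeff u 1 i : ℝ) : ℂ) - ((sinCoeff u 1 i : ℝ) : ℂ) * Complex.I)) := by
      rw [hddef]
      simp only [show -(-1 : ℤ) = 1 from by norm_num, show (-1 : ℤ) + 2 = 1 from by norm_num]
      exact Finset.sum_congr rfl fun i _ => by rw [hc1 i]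
    rw [← h5]
    exact hd1
  have hz2 : ((∑ i : Fin m, (cosCoeff u 1 i * cosCoeff u 1 i
        - sinCoeff u 1 i * sinCoeff u 1 i) : ℝ) : ℂ)
      - ((∑ i : Fin m, 2 * (cosCoeff u 1 i * sinCoeff u 1 i) : ℝ) : ℂ) * Complex.I = 0 := by
    rw [← hz, Complex.ofReal_sum, Complex.ofReal_sum, Finset.sum_mul,
      ← Finset.sum_sub_distrib]
    apply Finset.sum_congr rfl
    intro i _
    push_cast
    linear_combination (-1 : ℂ) * (((sinCoeff u 1 i : ℝ) : ℂ)) ^ 2 * Complex.I_sq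
  have hre : (∑ i : Fin m, (cosCoeff u 1 i * cosCoeff u 1 i
      - sinCoeff u 1 i * sinCoeff u 1 i) : ℝ) = 0 := by
    have h := congrArg Complex.re hz2
    simpa using h
  have him : (∑ i : Fin m, 2 * (cosCoeff u 1 i * sinCoeff u 1 i) : ℝ) = 0 := by
    have h := congrArg Complex.im hz2
    simpa using h
  rw [Finset.sum_sub_distrib] at hre
  constructor
  · rw [EuclideanSpace.norm_eq, EuclideanSpace.norm_eq]
    have h8 : (∑ i : Fin m, ‖cosCoeff u 1 i‖ ^ 2) = ∑ i : Fin m, ‖sinCoeff u 1 i‖ ^ 2 := by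
      have hx : ∀ x : ℝ, ‖x‖ ^ 2 = x * x := fun x => by
        rw [Real.norm_eq_abs, pow_two, abs_mul_abs_self]
      simp only [hx]
      linarith [hre]
    rw [h8]
  · rw [PiLp.inner_apply]
    simp only [RCLike.inner_apply, starRingEnd_apply, star_trivial]
    have h9 : (∑ i : Fin m, 2 * (cosCoeff u 1 i * sinCoeff u 1 i) : ℝ)
        = 2 * ∑ i : Fin m, cosCoeff u 1 i * sinCoeff u 1 i := by
      rw [Finset.mul_sum]
    rw [h9] at him
    linarith [him, Finset.sum_congr rfl fun i (_ : i ∈ Finset.univ) =>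
      mul_comm (sinCoeff u 1 i) (cosCoeff u 1 i)]
end

section
/- (Gaussian-weighted Pohozaev identity in ℝ², radial case.) Let u : ℝ² → ℝ^m be twice continuously differentiable and satisfy (∂u/∂x_i) · Δu = 0 almost everywhere in ℝ² for i = 1, 2, with ∫_{ℝ²} |∇u|² dx < ∞. Then for every x₀ = (x₀₁, x₀₂) ∈ ℝ² and every t > 0, writing y = x - x₀ = (y₁, y₂): ∬_{ℝ²} e^{-|y|²/4t} |y₁ ∂₁u + y₂ ∂₂u|² dx = ∬_{ℝ²} e^{-|y|²/4t} |-y₂ ∂₁u + y₁ ∂₂u|² dx, i.e. ∬ e^{-|x-x₀|²/4t} |x - x₀|² |∂u/∂ν|² dx = ∬ e^{-|x-x₀|²/4t} |∂u/∂θ|² dx, where ∂u/∂ν is the radial derivative and ∂u/∂θ the angular derivative about x₀. -/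
open Real MeasureTheory intervalIntegral

/-- First partial derivative `∂₁u` of a map `u : ℝ² → ℝ^m`. -/
noncomputable def pd1 {m : ℕ} (u : ℝ × ℝ → EuclideanSpace ℝ (Fin m)) (x : ℝ × ℝ) :
    EuclideanSpace ℝ (Fin m) :=
  fderiv ℝ u x (1, 0)

/-- Second partial derivative `∂₂u` of a map `u : ℝ² → ℝ^m`. -/
noncomputable def pd2 {m : ℕ} (u : ℝ × ℝ → EuclideanSpace ℝ (Fin m)) (x : ℝ × ℝ) :
    EuclideanSpace ℝ (Fin m) :=
  fderiv ℝ u x (0, 1)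

/-- The componentwise Laplacian `Δu = ∂₁₁u + ∂₂₂u` of a map `u : ℝ² → ℝ^m`. -/
noncomputable def lap2 {m : ℕ} (u : ℝ × ℝ → EuclideanSpace ℝ (Fin m)) (x : ℝ × ℝ) :
    EuclideanSpace ℝ (Fin m) :=
  fderiv ℝ (pd1 u) x (1, 0) + fderiv ℝ (pd2 u) x (0, 1)

/-!
The field `V = φ · conj((x - x₀) · h)`, where `φ` is the Gaussian weight and
`h = |∂₁u|² - |∂₂u|² - 2i ∂₁u · ∂₂u` is the Hopf differential of `u`, has divergence
`2φ (x - x₀) · (∇u · Δu) - φ/(2t) (|(x - x₀) · ∇u|² - |(x - x₀)^⊥ · ∇u|²)`: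
the Cauchy–Riemann defects of `h` are `2 ∂ᵢu · Δu`, and `∇φ = -φ (x - x₀)/(2t)`.
The first term vanishes a.e. by hypothesis. Since `φ |x - x₀|` is bounded, `|V| ≲ |∇u|²` is
integrable, so the divergence of `V` integrates to zero over the plane: by Fubini the integrals
of `|V|` over the four sides of `[-r, r]²` are integrable in `r`, hence small along a sequence
of radii tending to infinity, and the divergence theorem on these squares does the rest.
-/

open Filter Topology Set

theorem MeasureTheory.Integrable.exists_seq_tendsto_atTop_tendsto_zero {h : ℝ → ℝ}
    (hh : Integrable h) {p : ℝ → Prop} (hp : ∀ᵐ r, p r) :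
    ∃ R : ℕ → ℝ, Tendsto R atTop atTop ∧ (∀ n, p (R n)) ∧
      Tendsto (fun n => h (R n)) atTop (𝓝 0) := by
  have key : ∀ n : ℕ, ∃ r : ℝ, n < r ∧ p r ∧ |h r| < 1 / (n + 1) := by
    intro n
    by_contra! hcon
    have hlower : ∀ᵐ r ∂volume.restrict (Ioi (n : ℝ)), 1 / ((n : ℝ) + 1) ≤ ‖h r‖ := by
      rw [ae_restrict_iff' measurableSet_Ioi]
      filter_upwards [hp] with r hpr hr using hcon r hr hpr
    have hconst : IntegrableOn (fun _ => 1 / ((n : ℝ) + 1)) (Ioi (n : ℝ)) :=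
      Integrable.mono' hh.norm.restrict aestronglyMeasurable_const
        (hlower.mono fun r hr => by rwa [Real.norm_of_nonneg (by positivity)])
    rw [IntegrableOn, integrable_const_iff] at hconst
    rcases hconst with h0 | hfin
    · exact (Nat.one_div_pos_of_nat).ne' h0
    · simpa using hfin.measure_univ_lt_top
  choose R hnR hpR hhR using key
  refine ⟨R, tendsto_atTop_mono (fun n => (hnR n).le) tendsto_natCast_atTop_atTop, hpR, ?_⟩
  exact squeeze_zero_norm (fun n => (hhR n).le) tendsto_one_div_add_atTop_nhds_zero_nat

theorem MeasureTheory.Integrable.norm_intervalIntegral_le_integral_norm {E : Type*}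
    [NormedAddCommGroup E] [NormedSpace ℝ E] {φ : ℝ → E} (hφ : Integrable φ) {a b : ℝ}
    (hab : a ≤ b) : ‖∫ s in a..b, φ s‖ ≤ ∫ s, ‖φ s‖ := by
  rw [intervalIntegral.integral_of_le hab]
  exact (norm_integral_le_integral_norm _).trans
    (setIntegral_le_integral hφ.norm (ae_of_all _ fun _ => norm_nonneg _))

section SquareFlux

variable {E : Type*} [NormedAddCommGroup E] [NormedSpace ℝ E]

noncomputable def squareFlux (f g : ℝ × ℝ → E) (r : ℝ) : E :=
  (((∫ s in -r..r, g (s, r)) - ∫ s in -r..r, g (s, -r)) + ∫ s in -r..r, f (r, s)) -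
    ∫ s in -r..r, f (-r, s)

theorem exists_seq_tendsto_atTop_squareFlux_tendsto_zero {f g : ℝ × ℝ → E} (hfi : Integrable f)
    (hgi : Integrable g) :
    ∃ R : ℕ → ℝ, Tendsto R atTop atTop ∧ Tendsto (fun n => squareFlux f g (R n)) atTop (𝓝 0) := by
  have hfi' : Integrable f (volume.prod volume) := by rwa [← Measure.volume_eq_prod]
  have hgi' : Integrable g (volume.prod volume) := by rwa [← Measure.volume_eq_prod]
  have hneg : MeasurePreserving (fun r : ℝ => -r) := Measure.measurePreserving_neg _
  set edges : ℝ → ℝ := fun r => (∫ s, ‖g (s, r)‖) + (∫ s, ‖g (s, -r)‖) +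
    (∫ s, ‖f (r, s)‖) + ∫ s, ‖f (-r, s)‖
  have hedges : Integrable edges := by
    have hg₁ := hgi'.norm.swap.integral_prod_left
    have hf₁ := hfi'.norm.integral_prod_left
    exact (((hg₁.add ((hneg.integrable_comp hg₁.aestronglyMeasurable).2 hg₁)).add hf₁).add
      ((hneg.integrable_comp hf₁.aestronglyMeasurable).2 hf₁))
  have hslices : ∀ᵐ r, Integrable (fun s => g (s, r)) ∧ Integrable (fun s => g (s, -r)) ∧
      Integrable (fun s => f (r, s)) ∧ Integrable (fun s => f (-r, s)) := by
    have hg₁ := hgi'.prod_left_ae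
    have hf₁ := hfi'.prod_right_ae
    filter_upwards [hg₁, hneg.quasiMeasurePreserving.ae hg₁, hf₁,
      hneg.quasiMeasurePreserving.ae hf₁] with r h₁ h₂ h₃ h₄ using ⟨h₁, h₂, h₃, h₄⟩
  obtain ⟨R, hR, hRslices, hRedges⟩ := hedges.exists_seq_tendsto_atTop_tendsto_zero hslices
  refine ⟨R, hR, squeeze_zero_norm' ?_ hRedges⟩
  filter_upwards [hR.eventually_ge_atTop 0] with n hn
  obtain ⟨h₁, h₂, h₃, h₄⟩ := hRslices n
  have hle : -R n ≤ R n := neg_le_self hn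
  exact (norm_sub_le _ _).trans (add_le_add ((norm_add_le _ _).trans (add_le_add
    ((norm_sub_le _ _).trans (add_le_add (h₁.norm_intervalIntegral_le_integral_norm hle)
      (h₂.norm_intervalIntegral_le_integral_norm hle)))
    (h₃.norm_intervalIntegral_le_integral_norm hle)))
    (h₄.norm_intervalIntegral_le_integral_norm hle))

theorem integral_divergence_prod_eq_zero_of_integrable {f g : ℝ × ℝ → E}
    {f' g' : ℝ × ℝ → ℝ × ℝ →L[ℝ] E} (hf : ∀ x, HasFDerivAt f (f' x) x)
    (hg : ∀ x, HasFDerivAt g (g' x) x) (hfi : Integrable f) (hgi : Integrable g)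
    (hdiv : Integrable fun x => f' x (1, 0) + g' x (0, 1)) :
    ∫ x, f' x (1, 0) + g' x (0, 1) = 0 := by
  obtain ⟨R, hR, hflux⟩ := exists_seq_tendsto_atTop_squareFlux_tendsto_zero hfi hgi
  have hbox : ∀ n, 0 ≤ R n → (∫ x in Icc (-R n, -R n) (R n, R n), f' x (1, 0) + g' x (0, 1)) =
      squareFlux f g (R n) := fun n hn =>
    integral_divergence_prod_Icc_of_hasFDerivAt_of_le f g f' g' _ _
      ⟨by simpa using neg_le_self hn, by simpa using neg_le_self hn⟩
      (fun x _ => (hf x).continuousAt.continuousWithinAt)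
      (fun x _ => (hg x).continuousAt.continuousWithinAt)
      (fun x _ => hf x) (fun x _ => hg x) hdiv.integrableOn
  have hcover : AECover volume atTop fun n => Icc (-R n, -R n) (R n, R n) :=
    have hR' := tendsto_neg_atTop_atBot.comp hR
    aecover_Icc (by rw [← prod_atBot_atBot_eq]; exact hR'.prodMk hR')
      (by rw [← prod_atTop_atTop_eq]; exact hR.prodMk hR)
  refine tendsto_nhds_unique ((hcover.integral_tendsto_of_countably_generated hdiv).congr' ?_)
    hflux
  filter_upwards [hR.eventually_ge_atTop 0] with n hn using hbox n hn

end SquareFlux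

theorem Real.exp_neg_div_mul_le {c : ℝ} (hc : 0 < c) (r : ℝ) : exp (-r / c) * r ≤ c := by
  have hexp : exp (-r / c) * exp (r / c) = 1 := by rw [← exp_add, neg_div, neg_add_cancel, exp_zero]
  calc exp (-r / c) * r = c * (exp (-r / c) * (r / c)) := by field_simp
    _ ≤ c * (exp (-r / c) * exp (r / c)) := by
        gcongr; linarith [add_one_le_exp (r / c)]
    _ = c := by rw [hexp, mul_one]

theorem norm_smul_add_smul_sq_le {F : Type*} [SeminormedAddCommGroup F] [NormedSpace ℝ F]
    (a b : F) (c₁ c₂ : ℝ) :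
    ‖c₁ • a + c₂ • b‖ ^ 2 ≤ (c₁ ^ 2 + c₂ ^ 2) * (‖a‖ ^ 2 + ‖b‖ ^ 2) := by
  have htri : ‖c₁ • a + c₂ • b‖ ≤ |c₁| * ‖a‖ + |c₂| * ‖b‖ :=
    (norm_add_le _ _).trans_eq (by rw [norm_smul, norm_smul, Real.norm_eq_abs, Real.norm_eq_abs])
  calc ‖c₁ • a + c₂ • b‖ ^ 2 ≤ (|c₁| * ‖a‖ + |c₂| * ‖b‖) ^ 2 := by gcongr
    _ ≤ (c₁ ^ 2 + c₂ ^ 2) * (‖a‖ ^ 2 + ‖b‖ ^ 2) := by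
        nlinarith [sq_nonneg (|c₁| * ‖b‖ - |c₂| * ‖a‖), sq_abs c₁, sq_abs c₂]

theorem norm_smul_add_smul_sq_sub_norm_rotate_sq {F : Type*} [NormedAddCommGroup F]
    [InnerProductSpace ℝ F] (a b : F) (c₁ c₂ : ℝ) :
    ‖c₁ • a + c₂ • b‖ ^ 2 - ‖(-c₂) • a + c₁ • b‖ ^ 2 =
      (c₁ ^ 2 - c₂ ^ 2) * (‖a‖ ^ 2 - ‖b‖ ^ 2) + 4 * c₁ * c₂ * inner ℝ a b := by
  simp only [← real_inner_self_eq_norm_sq, inner_add_left, inner_add_right, real_inner_smul_left,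
    real_inner_smul_right, real_inner_comm a b]
  ring

theorem abs_mul_add_mul_le_of_abs_le {a b c₁ c₂ k : ℝ} (ha : |a| ≤ k) (hb : |b| ≤ k) :
    |c₁ * a + c₂ * b| ≤ (|c₁| + |c₂|) * k := by
  calc |c₁ * a + c₂ * b| ≤ |c₁| * |a| + |c₂| * |b| := (abs_add_le _ _).trans_eq (by simp [abs_mul])
    _ ≤ (|c₁| + |c₂|) * k := by rw [add_mul]; gcongr

theorem divergence_weighted_conj_mul {φ A B : ℝ × ℝ → ℝ} {x : ℝ × ℝ} (x₀ : ℝ × ℝ)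
    (hφ : DifferentiableAt ℝ φ x) (hA : DifferentiableAt ℝ A x) (hB : DifferentiableAt ℝ B x) :
    fderiv ℝ (fun y => φ y * ((y.1 - x₀.1) * A y - (y.2 - x₀.2) * B y)) x (1, 0) +
        fderiv ℝ (fun y => -(φ y * ((y.1 - x₀.1) * B y + (y.2 - x₀.2) * A y))) x (0, 1) =
      φ x * ((x.1 - x₀.1) * (fderiv ℝ A x (1, 0) - fderiv ℝ B x (0, 1)) -
          (x.2 - x₀.2) * (fderiv ℝ A x (0, 1) + fderiv ℝ B x (1, 0))) +
        fderiv ℝ φ x (1, 0) * ((x.1 - x₀.1) * A x - (x.2 - x₀.2) * B x) -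
        fderiv ℝ φ x (0, 1) * ((x.1 - x₀.1) * B x + (x.2 - x₀.2) * A x) := by
  have h₁ : HasFDerivAt (fun y : ℝ × ℝ => y.1 - x₀.1) (ContinuousLinearMap.fst ℝ ℝ ℝ) x :=
    hasFDerivAt_fst.sub_const _
  have h₂ : HasFDerivAt (fun y : ℝ × ℝ => y.2 - x₀.2) (ContinuousLinearMap.snd ℝ ℝ ℝ) x :=
    hasFDerivAt_snd.sub_const _
  have hV₁ : HasFDerivAt (fun y => φ y * ((y.1 - x₀.1) * A y - (y.2 - x₀.2) * B y)) _ x :=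
    hφ.hasFDerivAt.mul ((h₁.mul hA.hasFDerivAt).sub (h₂.mul hB.hasFDerivAt))
  have hV₂ : HasFDerivAt (fun y => -(φ y * ((y.1 - x₀.1) * B y + (y.2 - x₀.2) * A y))) _ x :=
    (hφ.hasFDerivAt.mul ((h₁.mul hB.hasFDerivAt).add (h₂.mul hA.hasFDerivAt))).neg
  rw [hV₁.fderiv, hV₂.fderiv]
  simp
  ring

noncomputable def gaussWeight (x₀ : ℝ × ℝ) (t : ℝ) (x : ℝ × ℝ) : ℝ :=
  Real.exp (-((x.1 - x₀.1) ^ 2 + (x.2 - x₀.2) ^ 2) / (4 * t))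

theorem contDiff_gaussWeight (x₀ : ℝ × ℝ) (t : ℝ) {n : WithTop ℕ∞} :
    ContDiff ℝ n (gaussWeight x₀ t) := by
  unfold gaussWeight; fun_prop

theorem fderiv_gaussWeight_apply (x₀ : ℝ × ℝ) (t : ℝ) (x v : ℝ × ℝ) :
    fderiv ℝ (gaussWeight x₀ t) x v =
      -(gaussWeight x₀ t x / (2 * t)) * ((x.1 - x₀.1) * v.1 + (x.2 - x₀.2) * v.2) := by
  have h₁ : HasFDerivAt (fun y : ℝ × ℝ => y.1 - x₀.1) (ContinuousLinearMap.fst ℝ ℝ ℝ) x :=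
    hasFDerivAt_fst.sub_const _
  have h₂ : HasFDerivAt (fun y : ℝ × ℝ => y.2 - x₀.2) (ContinuousLinearMap.snd ℝ ℝ ℝ) x :=
    hasFDerivAt_snd.sub_const _
  have h : HasFDerivAt (fun y : ℝ × ℝ => -((y.1 - x₀.1) ^ 2 + (y.2 - x₀.2) ^ 2) / (4 * t)) _ x :=
    (((h₁.pow 2).add (h₂.pow 2)).neg.mul_const (4 * t)⁻¹).congr_of_eventuallyEq
      (.of_forall fun y => div_eq_mul_inv _ _)
  have hφ : HasFDerivAt (gaussWeight x₀ t) _ x := h.exp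
  rw [hφ.fderiv]
  simp [gaussWeight]
  ring

section GaussBounds

variable {x₀ : ℝ × ℝ} {t : ℝ}

theorem gaussWeight_pos (x₀ : ℝ × ℝ) (t : ℝ) (x : ℝ × ℝ) : 0 < gaussWeight x₀ t x :=
  Real.exp_pos _

theorem gaussWeight_mul_sq_le (ht : 0 < t) (x : ℝ × ℝ) :
    gaussWeight x₀ t x * ((x.1 - x₀.1) ^ 2 + (x.2 - x₀.2) ^ 2) ≤ 4 * t :=
  Real.exp_neg_div_mul_le (by positivity) _

theorem gaussWeight_mul_abs_add_abs_le (ht : 0 < t) (x : ℝ × ℝ) :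
    gaussWeight x₀ t x * (|x.1 - x₀.1| + |x.2 - x₀.2|) ≤ 1 + 4 * t := by
  have hφ₁ : gaussWeight x₀ t x ≤ 1 := Real.exp_le_one_iff.2 (div_nonpos_of_nonpos_of_nonneg
    (neg_nonpos.2 (by positivity)) (by positivity))
  have habs : |x.1 - x₀.1| + |x.2 - x₀.2| ≤ 1 + ((x.1 - x₀.1) ^ 2 + (x.2 - x₀.2) ^ 2) := by
    nlinarith [sq_nonneg (|x.1 - x₀.1| - 1), sq_nonneg (|x.2 - x₀.2| - 1),
      sq_abs (x.1 - x₀.1), sq_abs (x.2 - x₀.2)]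
  calc gaussWeight x₀ t x * (|x.1 - x₀.1| + |x.2 - x₀.2|)
      ≤ gaussWeight x₀ t x * (1 + ((x.1 - x₀.1) ^ 2 + (x.2 - x₀.2) ^ 2)) := by
        gcongr; exact (gaussWeight_pos x₀ t x).le
    _ ≤ 1 + 4 * t := by rw [mul_one_add]; linarith [gaussWeight_mul_sq_le (x₀ := x₀) ht x]

theorem abs_gaussWeight_mul_le (ht : 0 < t) {a b k : ℝ} (ha : |a| ≤ k) (hb : |b| ≤ k)
    (x : ℝ × ℝ) (c₁ c₂ : ℝ) (hc₁ : |c₁| = |x.1 - x₀.1|) (hc₂ : |c₂| = |x.2 - x₀.2|) :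
    |gaussWeight x₀ t x * (c₁ * a + c₂ * b)| ≤ (1 + 4 * t) * k := by
  have hφ := gaussWeight_pos x₀ t x
  rw [abs_mul, abs_of_pos hφ]
  calc _ ≤ gaussWeight x₀ t x * ((|c₁| + |c₂|) * k) := by
        gcongr; exact abs_mul_add_mul_le_of_abs_le ha hb
    _ ≤ (1 + 4 * t) * k := by
        rw [← mul_assoc, hc₁, hc₂]
        exact mul_le_mul_of_nonneg_right (gaussWeight_mul_abs_add_abs_le ht x)
          ((abs_nonneg a).trans ha)

end GaussBounds

noncomputable def hopfRe {m : ℕ} (u : ℝ × ℝ → EuclideanSpace ℝ (Fin m)) (x : ℝ × ℝ) : ℝ :=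
  ‖pd1 u x‖ ^ 2 - ‖pd2 u x‖ ^ 2

noncomputable def hopfIm {m : ℕ} (u : ℝ × ℝ → EuclideanSpace ℝ (Fin m)) (x : ℝ × ℝ) : ℝ :=
  -(2 * inner ℝ (pd1 u x) (pd2 u x))

section Hopf

variable {m : ℕ} {u : ℝ × ℝ → EuclideanSpace ℝ (Fin m)}

theorem contDiff_pd1 (hu : ContDiff ℝ 2 u) : ContDiff ℝ 1 (pd1 u) :=
  (hu.fderiv_right (m := 1) le_rfl).clm_apply contDiff_const

theorem contDiff_pd2 (hu : ContDiff ℝ 2 u) : ContDiff ℝ 1 (pd2 u) :=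
  (hu.fderiv_right (m := 1) le_rfl).clm_apply contDiff_const

theorem fderiv_pd1_apply_snd (hu : ContDiff ℝ 2 u) (x : ℝ × ℝ) :
    fderiv ℝ (pd1 u) x (0, 1) = fderiv ℝ (pd2 u) x (1, 0) := by
  have hdu : DifferentiableAt ℝ (fderiv ℝ u) x :=
    (hu.fderiv_right (m := 1) le_rfl).differentiable one_ne_zero x
  have hpd : ∀ v w : ℝ × ℝ,
      fderiv ℝ (fun y => fderiv ℝ u y v) x w = fderiv ℝ (fderiv ℝ u) x w v := fun v w => by
    rw [fderiv_clm_apply hdu (differentiableAt_const v)]; simp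
  exact (hpd _ _).trans ((second_derivative_symmetric
    (fun y => (hu.differentiable two_ne_zero y).hasFDerivAt) hdu.hasFDerivAt _ _).trans
      (hpd _ _).symm)

theorem fderiv_hopfRe_apply (hu : ContDiff ℝ 2 u) (x v : ℝ × ℝ) :
    fderiv ℝ (hopfRe u) x v = 2 * inner ℝ (pd1 u x) (fderiv ℝ (pd1 u) x v) -
      2 * inner ℝ (pd2 u x) (fderiv ℝ (pd2 u) x v) := by
  have h₁ := ((contDiff_pd1 hu).differentiable one_ne_zero x).hasFDerivAt.norm_sq
  have h₂ := ((contDiff_pd2 hu).differentiable one_ne_zero x).hasFDerivAt.norm_sq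
  have h : HasFDerivAt (hopfRe u) _ x := h₁.sub h₂
  rw [h.fderiv]
  simp

theorem fderiv_hopfIm_apply (hu : ContDiff ℝ 2 u) (x v : ℝ × ℝ) :
    fderiv ℝ (hopfIm u) x v = -(2 * (inner ℝ (fderiv ℝ (pd1 u) x v) (pd2 u x) +
      inner ℝ (pd1 u x) (fderiv ℝ (pd2 u) x v))) := by
  have h₁ := ((contDiff_pd1 hu).differentiable one_ne_zero x).hasFDerivAt
  have h₂ := ((contDiff_pd2 hu).differentiable one_ne_zero x).hasFDerivAt
  have h : HasFDerivAt (hopfIm u) _ x := ((h₁.inner ℝ h₂).const_mul 2).neg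
  rw [h.fderiv]
  simp [fderivInnerCLM_apply]
  ring

theorem hopf_cauchyRiemann_fst (hu : ContDiff ℝ 2 u) (x : ℝ × ℝ) :
    fderiv ℝ (hopfRe u) x (1, 0) - fderiv ℝ (hopfIm u) x (0, 1) =
      2 * inner ℝ (pd1 u x) (lap2 u x) := by
  rw [fderiv_hopfRe_apply hu, fderiv_hopfIm_apply hu, fderiv_pd1_apply_snd hu, lap2,
    inner_add_right, real_inner_comm (pd2 u x)]
  ring

theorem hopf_cauchyRiemann_snd (hu : ContDiff ℝ 2 u) (x : ℝ × ℝ) :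
    fderiv ℝ (hopfRe u) x (0, 1) + fderiv ℝ (hopfIm u) x (1, 0) =
      -(2 * inner ℝ (pd2 u x) (lap2 u x)) := by
  rw [fderiv_hopfRe_apply hu, fderiv_hopfIm_apply hu, fderiv_pd1_apply_snd hu, lap2,
    inner_add_right, real_inner_comm (pd2 u x)]
  ring

theorem contDiff_hopfRe (hu : ContDiff ℝ 2 u) : ContDiff ℝ 1 (hopfRe u) :=
  ((contDiff_pd1 hu).norm_sq ℝ).sub ((contDiff_pd2 hu).norm_sq ℝ)

theorem contDiff_hopfIm (hu : ContDiff ℝ 2 u) : ContDiff ℝ 1 (hopfIm u) :=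
  (((contDiff_pd1 hu).inner ℝ (contDiff_pd2 hu)).const_smul (2 : ℝ)).neg

theorem abs_hopfRe_le (x : ℝ × ℝ) : |hopfRe u x| ≤ ‖pd1 u x‖ ^ 2 + ‖pd2 u x‖ ^ 2 := by
  rw [hopfRe, abs_le]
  constructor <;> linarith [sq_nonneg ‖pd1 u x‖, sq_nonneg ‖pd2 u x‖]

theorem abs_hopfIm_le (x : ℝ × ℝ) : |hopfIm u x| ≤ ‖pd1 u x‖ ^ 2 + ‖pd2 u x‖ ^ 2 := by
  rw [hopfIm, abs_neg, abs_mul, abs_two]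
  nlinarith [abs_real_inner_le_norm (pd1 u x) (pd2 u x), sq_nonneg (‖pd1 u x‖ - ‖pd2 u x‖)]

end Hopf

/-- `pohozaevField₁ + i pohozaevField₂ = φ · conj((x - x₀) · (hopfRe u + i hopfIm u))`, with
points of the plane read as complex numbers. -/
noncomputable def pohozaevField₁ {m : ℕ} (u : ℝ × ℝ → EuclideanSpace ℝ (Fin m)) (x₀ : ℝ × ℝ)
    (t : ℝ) (x : ℝ × ℝ) : ℝ :=
  gaussWeight x₀ t x * ((x.1 - x₀.1) * hopfRe u x - (x.2 - x₀.2) * hopfIm u x)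

noncomputable def pohozaevField₂ {m : ℕ} (u : ℝ × ℝ → EuclideanSpace ℝ (Fin m)) (x₀ : ℝ × ℝ)
    (t : ℝ) (x : ℝ × ℝ) : ℝ :=
  -(gaussWeight x₀ t x * ((x.1 - x₀.1) * hopfIm u x + (x.2 - x₀.2) * hopfRe u x))

section Pohozaev

variable {m : ℕ} {u : ℝ × ℝ → EuclideanSpace ℝ (Fin m)} {x₀ : ℝ × ℝ} {t : ℝ}

theorem contDiff_pohozaevField₁ (hu : ContDiff ℝ 2 u) : ContDiff ℝ 1 (pohozaevField₁ u x₀ t) := by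
  have := contDiff_hopfRe hu
  have := contDiff_hopfIm hu
  have := contDiff_gaussWeight x₀ t (n := 1)
  unfold pohozaevField₁
  fun_prop

theorem contDiff_pohozaevField₂ (hu : ContDiff ℝ 2 u) : ContDiff ℝ 1 (pohozaevField₂ u x₀ t) := by
  have := contDiff_hopfRe hu
  have := contDiff_hopfIm hu
  have := contDiff_gaussWeight x₀ t (n := 1)
  unfold pohozaevField₂
  fun_prop

theorem divergence_pohozaevField (hu : ContDiff ℝ 2 u) (x : ℝ × ℝ) :
    fderiv ℝ (pohozaevField₁ u x₀ t) x (1, 0) + fderiv ℝ (pohozaevField₂ u x₀ t) x (0, 1) =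
      2 * gaussWeight x₀ t x * ((x.1 - x₀.1) * inner ℝ (pd1 u x) (lap2 u x) +
        (x.2 - x₀.2) * inner ℝ (pd2 u x) (lap2 u x)) -
      gaussWeight x₀ t x / (2 * t) *
        (‖(x.1 - x₀.1) • pd1 u x + (x.2 - x₀.2) • pd2 u x‖ ^ 2 -
          ‖(-(x.2 - x₀.2)) • pd1 u x + (x.1 - x₀.1) • pd2 u x‖ ^ 2) := by
  unfold pohozaevField₁ pohozaevField₂
  rw [divergence_weighted_conj_mul x₀
      ((contDiff_gaussWeight x₀ t (n := 1)).differentiable one_ne_zero x)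
      ((contDiff_hopfRe hu).differentiable one_ne_zero x)
      ((contDiff_hopfIm hu).differentiable one_ne_zero x),
    hopf_cauchyRiemann_fst hu, hopf_cauchyRiemann_snd hu, fderiv_gaussWeight_apply,
    fderiv_gaussWeight_apply, norm_smul_add_smul_sq_sub_norm_rotate_sq, hopfRe, hopfIm]
  ring

theorem abs_pohozaevField₁_le (ht : 0 < t) (x : ℝ × ℝ) :
    |pohozaevField₁ u x₀ t x| ≤ (1 + 4 * t) * (‖pd1 u x‖ ^ 2 + ‖pd2 u x‖ ^ 2) := by
  rw [pohozaevField₁, sub_eq_add_neg, ← neg_mul]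
  exact abs_gaussWeight_mul_le ht (abs_hopfRe_le x) (abs_hopfIm_le x) x _ _ rfl (abs_neg _)

theorem abs_pohozaevField₂_le (ht : 0 < t) (x : ℝ × ℝ) :
    |pohozaevField₂ u x₀ t x| ≤ (1 + 4 * t) * (‖pd1 u x‖ ^ 2 + ‖pd2 u x‖ ^ 2) := by
  rw [pohozaevField₂, abs_neg]
  exact abs_gaussWeight_mul_le ht (abs_hopfIm_le x) (abs_hopfRe_le x) x _ _ rfl rfl

theorem integrable_pohozaevField₁ (hu : ContDiff ℝ 2 u)
    (henergy : Integrable fun x => ‖pd1 u x‖ ^ 2 + ‖pd2 u x‖ ^ 2) (ht : 0 < t) :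
    Integrable (pohozaevField₁ u x₀ t) :=
  (henergy.const_mul _).mono' (contDiff_pohozaevField₁ hu).continuous.aestronglyMeasurable
    (ae_of_all _ fun x => (Real.norm_eq_abs _).trans_le (abs_pohozaevField₁_le ht x))

theorem integrable_pohozaevField₂ (hu : ContDiff ℝ 2 u)
    (henergy : Integrable fun x => ‖pd1 u x‖ ^ 2 + ‖pd2 u x‖ ^ 2) (ht : 0 < t) :
    Integrable (pohozaevField₂ u x₀ t) :=
  (henergy.const_mul _).mono' (contDiff_pohozaevField₂ hu).continuous.aestronglyMeasurable
    (ae_of_all _ fun x => (Real.norm_eq_abs _).trans_le (abs_pohozaevField₂_le ht x))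

theorem integrable_gaussWeight_mul_norm_sq (hu : ContDiff ℝ 2 u)
    (henergy : Integrable fun x => ‖pd1 u x‖ ^ 2 + ‖pd2 u x‖ ^ 2) (ht : 0 < t)
    {c₁ c₂ : ℝ × ℝ → ℝ} (hc₁ : Continuous c₁) (hc₂ : Continuous c₂)
    (hc : ∀ x, c₁ x ^ 2 + c₂ x ^ 2 = (x.1 - x₀.1) ^ 2 + (x.2 - x₀.2) ^ 2) :
    Integrable fun x => gaussWeight x₀ t x * ‖c₁ x • pd1 u x + c₂ x • pd2 u x‖ ^ 2 := by
  refine (henergy.const_mul (4 * t)).mono' ?_ (ae_of_all _ fun x => ?_)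
  · have := (contDiff_gaussWeight x₀ t (n := 0)).continuous
    have := (contDiff_pd1 hu).continuous
    have := (contDiff_pd2 hu).continuous
    fun_prop
  have hφ := gaussWeight_pos x₀ t x
  rw [Real.norm_of_nonneg (by positivity)]
  calc _ ≤ gaussWeight x₀ t x * ((c₁ x ^ 2 + c₂ x ^ 2) * (‖pd1 u x‖ ^ 2 + ‖pd2 u x‖ ^ 2)) := by
        gcongr; exact norm_smul_add_smul_sq_le _ _ _ _
    _ ≤ 4 * t * (‖pd1 u x‖ ^ 2 + ‖pd2 u x‖ ^ 2) := by
        rw [← mul_assoc, hc]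
        exact mul_le_mul_of_nonneg_right (gaussWeight_mul_sq_le ht x) (by positivity)

end Pohozaev

/-- **Gaussian-weighted Pohozaev identity in ℝ², radial case.** Let `u : ℝ² → ℝ^m` be `C²`
with `∂ᵢu · Δu = 0` a.e. for `i = 1,2` and finite Dirichlet energy. Then for every
`x₀ ∈ ℝ²` and `t > 0`, writing `y = x - x₀`,
`∬ e^{-|y|²/4t} |y₁ ∂₁u + y₂ ∂₂u|² dx = ∬ e^{-|y|²/4t} |-y₂ ∂₁u + y₁ ∂₂u|² dx`,
i.e. `∬ e^{-|x-x₀|²/4t} |x-x₀|² |∂u/∂ν|² dx = ∬ e^{-|x-x₀|²/4t} |∂u/∂θ|² dx`. -/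
theorem gaussian_pohozaev_2d_radial {m : ℕ} (u : ℝ × ℝ → EuclideanSpace ℝ (Fin m))
    (hu : ContDiff ℝ 2 u)
    (heq : ∀ᵐ x : ℝ × ℝ,
      (inner ℝ (pd1 u x) (lap2 u x) : ℝ) = 0 ∧ (inner ℝ (pd2 u x) (lap2 u x) : ℝ) = 0)
    (henergy : Integrable (fun x : ℝ × ℝ => ‖pd1 u x‖ ^ 2 + ‖pd2 u x‖ ^ 2)) :
    ∀ (x₀ : ℝ × ℝ) (t : ℝ), 0 < t →
      (∫ x : ℝ × ℝ,
          Real.exp (-((x.1 - x₀.1) ^ 2 + (x.2 - x₀.2) ^ 2) / (4 * t)) *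
            ‖(x.1 - x₀.1) • pd1 u x + (x.2 - x₀.2) • pd2 u x‖ ^ 2)
        = ∫ x : ℝ × ℝ,
            Real.exp (-((x.1 - x₀.1) ^ 2 + (x.2 - x₀.2) ^ 2) / (4 * t)) *
              ‖(-(x.2 - x₀.2)) • pd1 u x + (x.1 - x₀.1) • pd2 u x‖ ^ 2 := by
  intro x₀ t ht
  have hP := integrable_gaussWeight_mul_norm_sq hu henergy ht (c₁ := fun x => x.1 - x₀.1)
    (c₂ := fun x => x.2 - x₀.2) (by fun_prop) (by fun_prop) fun x => rfl
  have hQ := integrable_gaussWeight_mul_norm_sq hu henergy ht (c₁ := fun x => -(x.2 - x₀.2))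
    (c₂ := fun x => x.1 - x₀.1) (by fun_prop) (by fun_prop) fun x => by ring
  have hdiv : (fun x => fderiv ℝ (pohozaevField₁ u x₀ t) x (1, 0) +
      fderiv ℝ (pohozaevField₂ u x₀ t) x (0, 1)) =ᵐ[volume] fun x =>
        -(2 * t)⁻¹ * (gaussWeight x₀ t x * ‖(x.1 - x₀.1) • pd1 u x + (x.2 - x₀.2) • pd2 u x‖ ^ 2 -
          gaussWeight x₀ t x * ‖(-(x.2 - x₀.2)) • pd1 u x + (x.1 - x₀.1) • pd2 u x‖ ^ 2) := by
    filter_upwards [heq] with x ⟨h₁, h₂⟩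
    rw [divergence_pohozaevField hu, h₁, h₂]
    ring
  have hzero := integral_divergence_prod_eq_zero_of_integrable
    (fun x => ((contDiff_pohozaevField₁ hu).differentiable one_ne_zero x).hasFDerivAt)
    (fun x => ((contDiff_pohozaevField₂ hu).differentiable one_ne_zero x).hasFDerivAt)
    (integrable_pohozaevField₁ hu henergy ht) (integrable_pohozaevField₂ hu henergy ht)
    (((hP.sub hQ).const_mul _).congr hdiv.symm)
  rw [integral_congr_ae hdiv, MeasureTheory.integral_const_mul, integral_sub hP hQ] at hzero
  exact sub_eq_zero.1 ((mul_eq_zero.1 hzero).resolve_left (by simp [ht.ne']))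
end
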